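/- arXiv:2312.11168 — 7 statements merged into one kernel-verified Lean document; each statement's English description precedes it below -/
import Mathlib

section
/- Let f : ℝⁿ → ℝ ∪ {+∞} be a proper lower semicontinuous convex function and x* a global minimizer. Then x* is a sharp minimizer of f (i.e., there exist κ, δ > 0 such that f(x) - f(x*) ≥ κ‖x - x*‖ for all ‖x - x*‖ ≤ δ) if and only if 0 ∈ int ∂f(x*). -/
/-!
A global lower bound `f x* + κ‖x - x*‖ ≤ f x` is the same as every `s` with `‖s‖ ≤ κ` being
a subgradient at `x*`: one direction is Cauchy–Schwarz, the other tests the bound with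
`s = κ (x - x*) / ‖x - x*‖`. So `0 ∈ int ∂f(x*)` says exactly that such a global bound holds for
some `κ > 0`, and convexity upgrades the local bound of a sharp minimizer to a global one by
comparing `f x` with the value of `f` where the segment from `x*` to `x` leaves the ball.
-/

open Metric
open scoped InnerProductSpace

section

variable {E : Type*} [NormedAddCommGroup E]

def subgradients [InnerProductSpace ℝ E] (f : E → EReal) (x₀ : E) : Set E :=
  {s | ∀ x, f x₀ + ((⟪s, x - x₀⟫_ℝ : ℝ) : EReal) ≤ f x}

theorem closedBall_subset_subgradients_iff [InnerProductSpace ℝ E] {f : E → EReal} {x₀ : E}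
    {κ : ℝ} (hκ : 0 ≤ κ) :
    closedBall 0 κ ⊆ subgradients f x₀ ↔ ∀ x, f x₀ + ((κ * ‖x - x₀‖ : ℝ) : EReal) ≤ f x := by
  constructor
  · intro hsub x
    rcases eq_or_ne x x₀ with rfl | hx
    · simp
    have hd : ‖x - x₀‖ ≠ 0 := norm_ne_zero_iff.2 (sub_ne_zero.2 hx)
    have hs : (κ / ‖x - x₀‖) • (x - x₀) ∈ closedBall (0 : E) κ := by
      rw [mem_closedBall_zero_iff, norm_smul, Real.norm_eq_abs, abs_div, abs_norm,
        abs_of_nonneg hκ, div_mul_cancel₀ κ hd]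
    have hinner : ⟪(κ / ‖x - x₀‖) • (x - x₀), x - x₀⟫_ℝ = κ * ‖x - x₀‖ := by
      rw [real_inner_smul_left, real_inner_self_eq_norm_mul_norm]
      field_simp
    simpa only [hinner] using hsub hs x
  · intro hsharp s hs x
    have hinner : ⟪s, x - x₀⟫_ℝ ≤ κ * ‖x - x₀‖ :=
      (real_inner_le_norm s _).trans
        (mul_le_mul_of_nonneg_right (mem_closedBall_zero_iff.1 hs) (norm_nonneg _))
    exact (add_le_add_right (EReal.coe_le_coe_iff.2 hinner) _).trans (hsharp x)

theorem zero_mem_interior_subgradients_iff [InnerProductSpace ℝ E] {f : E → EReal} {x₀ : E} :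
    0 ∈ interior (subgradients f x₀) ↔
      ∃ κ > 0, ∀ x, f x₀ + ((κ * ‖x - x₀‖ : ℝ) : EReal) ≤ f x := by
  rw [mem_interior_iff_mem_nhds, nhds_basis_closedBall.mem_iff]
  exact exists_congr fun κ =>
    and_congr_right fun hκ => closedBall_subset_subgradients_iff hκ.le

theorem sharp_bound_of_sharp_bound_on_closedBall [NormedSpace ℝ E] {f : E → EReal} {x₀ : E}
    {r κ δ : ℝ}
    (hconvex : ∀ x y, ∀ a b : ℝ, 0 ≤ a → 0 ≤ b → a + b = 1 →
      f (a • x + b • y) ≤ (a : EReal) * f x + (b : EReal) * f y)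
    (hx₀ : f x₀ = r) (hδ : 0 < δ)
    (hloc : ∀ x, ‖x - x₀‖ ≤ δ → f x₀ + ((κ * ‖x - x₀‖ : ℝ) : EReal) ≤ f x) (x : E) :
    f x₀ + ((κ * ‖x - x₀‖ : ℝ) : EReal) ≤ f x := by
  rcases le_or_gt ‖x - x₀‖ δ with hle | hlt
  · exact hloc x hle
  have hd : 0 < ‖x - x₀‖ := hδ.trans hlt
  set t := δ / ‖x - x₀‖
  have ht : 0 < t := div_pos hδ hd
  have htd : t * ‖x - x₀‖ = δ := div_mul_cancel₀ δ hd.ne'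
  have hyd : ‖(1 - t) • x₀ + t • x - x₀‖ = δ := by
    have : (1 - t) • x₀ + t • x - x₀ = t • (x - x₀) := by module
    rw [this, norm_smul, Real.norm_eq_abs, abs_of_pos ht, htd]
  have hsegment := (hloc _ hyd.le).trans
    (hconvex x₀ x (1 - t) t (by linarith [(div_lt_one hd).2 hlt]) ht.le (by ring))
  rw [hyd, hx₀, ← EReal.coe_add] at hsegment
  rw [hx₀]
  induction hfx : f x using EReal.rec with
  | bot =>
    rw [hfx, EReal.coe_mul_bot_of_pos ht, EReal.add_bot, le_bot_iff] at hsegment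
    exact absurd hsegment (EReal.coe_ne_bot _)
  | top => exact le_top
  | coe fx =>
    rw [hfx] at hsegment
    norm_cast at hsegment ⊢
    have hκδ : κ * δ = t * (κ * ‖x - x₀‖) := by rw [← htd]; ring
    refine le_of_mul_le_mul_left ?_ ht
    linarith

end

theorem sharp_minimizer_iff_zero_mem_interior_subdifferential_general
    (n : ℕ) (f : EuclideanSpace ℝ (Fin n) → EReal)
    (hproper_bot : ∀ x, ⊥ < f x) (hproper_top : ∃ x, f x < ⊤)
    (hconvex : ∀ x y, ∀ a b : ℝ, 0 ≤ a → 0 ≤ b → a + b = 1 →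
      f (a • x + b • y) ≤ (a : EReal) * f x + (b : EReal) * f y)
    (xstar : EuclideanSpace ℝ (Fin n)) (hmin : ∀ x, f xstar ≤ f x) :
    (∃ κ > (0 : ℝ), ∃ δ > (0 : ℝ), ∀ x, ‖x - xstar‖ ≤ δ →
        f xstar + ((κ * ‖x - xstar‖ : ℝ) : EReal) ≤ f x) ↔
      (0 : EuclideanSpace ℝ (Fin n)) ∈
        interior {s | ∀ x, f xstar + ((⟪s, x - xstar⟫_ℝ : ℝ) : EReal) ≤ f x} := by
  obtain ⟨x₁, hx₁⟩ := hproper_top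
  have hfin : f xstar = ((f xstar).toReal : EReal) :=
    (EReal.coe_toReal ((hmin x₁).trans_lt hx₁).ne (hproper_bot xstar).ne').symm
  change _ ↔ 0 ∈ interior (subgradients f xstar)
  rw [zero_mem_interior_subgradients_iff]
  constructor
  · rintro ⟨κ, hκ, δ, hδ, hloc⟩
    exact ⟨κ, hκ, sharp_bound_of_sharp_bound_on_closedBall hconvex hfin hδ hloc⟩
  · rintro ⟨κ, hκ, hglobal⟩
    exact ⟨κ, hκ, 1, one_pos, fun x _ => hglobal x⟩

/-- For a proper lsc convex function `f : ℝⁿ → ℝ ∪ {+∞}` and a global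
minimizer `x*`, `x*` is a sharp minimizer (∃ κ, δ > 0 with
`f x - f x* ≥ κ‖x - x*‖` whenever `‖x - x*‖ ≤ δ`) iff `0 ∈ int ∂f(x*)`. -/
theorem sharp_minimizer_iff_zero_mem_interior_subdifferential
    (n : ℕ) (f : EuclideanSpace ℝ (Fin n) → EReal)
    (hproper_bot : ∀ x, ⊥ < f x) (hproper_top : ∃ x, f x < ⊤)
    (hconvex : ∀ x y, ∀ a b : ℝ, 0 ≤ a → 0 ≤ b → a + b = 1 →
      f (a • x + b • y) ≤ (a : EReal) * f x + (b : EReal) * f y)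
    (hlsc : LowerSemicontinuous f)
    (xstar : EuclideanSpace ℝ (Fin n)) (hmin : ∀ x, f xstar ≤ f x) :
    (∃ κ > (0 : ℝ), ∃ δ > (0 : ℝ), ∀ x, ‖x - xstar‖ ≤ δ →
        f xstar + ((κ * ‖x - xstar‖ : ℝ) : EReal) ≤ f x) ↔
      (0 : EuclideanSpace ℝ (Fin n)) ∈
        interior {s | ∀ x, f xstar + ((⟪s, x - xstar⟫_ℝ : ℝ) : EReal) ≤ f x} :=
  sharp_minimizer_iff_zero_mem_interior_subdifferential_general n f hproper_bot hproper_top hconvex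
    xstar hmin
end

section
/- Let J be a proper lsc convex function on ℝⁿ, A ∈ ℝ^{m×n}, b₀ ∈ ℝᵐ, and x₀ a feasible point of the problem min J(x) s.t. Ax = b₀. Then x₀ is the unique solution of this problem if and only if Ker A ∩ D_J(x₀) = {0}, where D_J(x₀) = cone{x - x₀ : J(x) ≤ J(x₀)} is the descent cone of J at x₀. -/
section DescentCone

variable {𝕜 E F β : Type*} [Field 𝕜] [LinearOrder 𝕜]
  [AddCommGroup E] [Module 𝕜 E] [AddCommGroup F] [Module 𝕜 F] [LinearOrder β]

variable (𝕜) in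
def descentCone (J : E → β) (x₀ : E) : Set E :=
  {h | ∃ l > (0 : 𝕜), ∃ x, J x ≤ J x₀ ∧ h = l • (x - x₀)}

theorem sub_mem_descentCone [IsStrictOrderedRing 𝕜] {J : E → β} {x₀ x : E} (hx : J x ≤ J x₀) :
    x - x₀ ∈ descentCone 𝕜 J x₀ :=
  ⟨1, one_pos, x, hx, (one_smul 𝕜 _).symm⟩

theorem zero_mem_descentCone [IsStrictOrderedRing 𝕜] (J : E → β) (x₀ : E) :
    (0 : E) ∈ descentCone 𝕜 J x₀ := by
  simpa using sub_mem_descentCone (𝕜 := 𝕜) (le_refl (J x₀))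

theorem exists_feasible_le_of_mem_ker_inter_descentCone (A : E →ₗ[𝕜] F) {J : E → β} {x₀ h : E}
    (hA : A h = 0) (hD : h ∈ descentCone 𝕜 J x₀) (hh : h ≠ 0) :
    ∃ x, A x = A x₀ ∧ x ≠ x₀ ∧ J x ≤ J x₀ := by
  obtain ⟨l, hl, x, hJx, rfl⟩ := hD
  have hsub : x - x₀ ≠ 0 := right_ne_zero_of_smul hh
  have hker : A (x - x₀) = 0 := by
    rwa [map_smul, smul_eq_zero_iff_right hl.ne'] at hA
  exact ⟨x, sub_eq_zero.mp (by rwa [← map_sub]), sub_ne_zero.mp hsub, hJx⟩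

theorem forall_lt_iff_ker_inter_descentCone_eq_zero [IsStrictOrderedRing 𝕜]
    (A : E →ₗ[𝕜] F) (J : E → β) (x₀ : E) :
    (∀ x, A x = A x₀ → x ≠ x₀ → J x₀ < J x) ↔
      {h | A h = 0} ∩ descentCone 𝕜 J x₀ = {0} := by
  constructor
  · intro huniq
    refine Set.Subset.antisymm (fun h ⟨hA, hD⟩ => ?_) ?_
    · by_contra hh
      obtain ⟨x, hAx, hne, hJx⟩ := exists_feasible_le_of_mem_ker_inter_descentCone A hA hD hh
      exact (huniq x hAx hne).not_ge hJx
    · rintro _ rfl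
      exact ⟨map_zero A, zero_mem_descentCone J x₀⟩
  · intro hset x hAx hne
    by_contra! hJx
    have hmem : x - x₀ ∈ {h | A h = 0} ∩ descentCone 𝕜 J x₀ :=
      ⟨by simp [hAx], sub_mem_descentCone hJx⟩
    rw [hset] at hmem
    exact hne (sub_eq_zero.mp hmem)

end DescentCone

theorem unique_solution_iff_kernel_inter_descent_cone_general
    (n m : ℕ) (J : EuclideanSpace ℝ (Fin n) → EReal)
    (A : EuclideanSpace ℝ (Fin n) →L[ℝ] EuclideanSpace ℝ (Fin m))
    (b₀ : EuclideanSpace ℝ (Fin m))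
    (x₀ : EuclideanSpace ℝ (Fin n)) (hfeas : A x₀ = b₀)
    (DJ : Set (EuclideanSpace ℝ (Fin n)))
    (hDJ : DJ = {hh | ∃ l > (0 : ℝ), ∃ x, J x ≤ J x₀ ∧ hh = l • (x - x₀)}) :
    (∀ x, A x = b₀ → x ≠ x₀ → J x₀ < J x) ↔
      {h | A h = 0} ∩ DJ = {0} := by
  subst hfeas hDJ
  exact forall_lt_iff_ker_inter_descentCone_eq_zero A.toLinearMap J x₀

/-- For a proper lsc convex `J`, a linear map `A` and a feasible point `x₀`
(`A x₀ = b₀`, `J x₀ < ∞`), `x₀` is the unique solution of `min J(x) s.t. Ax = b₀` iff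
`Ker A ∩ D_J(x₀) = {0}`, where `D_J(x₀) = cone {x - x₀ : J x ≤ J x₀}` is the descent cone. -/
theorem unique_solution_iff_kernel_inter_descent_cone
    (n m : ℕ) (J : EuclideanSpace ℝ (Fin n) → EReal)
    (hproper_bot : ∀ x, ⊥ < J x)
    (hconvex : ∀ x y, ∀ a b : ℝ, 0 ≤ a → 0 ≤ b → a + b = 1 →
      J (a • x + b • y) ≤ (a : EReal) * J x + (b : EReal) * J y)
    (hlsc : LowerSemicontinuous J)
    (A : EuclideanSpace ℝ (Fin n) →L[ℝ] EuclideanSpace ℝ (Fin m))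
    (b₀ : EuclideanSpace ℝ (Fin m))
    (x₀ : EuclideanSpace ℝ (Fin n)) (hfeas : A x₀ = b₀) (hfin : J x₀ < ⊤)
    (DJ : Set (EuclideanSpace ℝ (Fin n)))
    (hDJ : DJ = {hh | ∃ l > (0 : ℝ), ∃ x, J x ≤ J x₀ ∧ hh = l • (x - x₀)}) :
    (∀ x, A x = b₀ → x ≠ x₀ → J x₀ < J x) ↔
      {h | A h = 0} ∩ DJ = {0} :=
  unique_solution_iff_kernel_inter_descent_cone_general n m J A b₀ x₀ hfeas DJ hDJ
end

section
/- Let f : ℝⁿ → (-∞, +∞] be proper lsc convex, x₀* ∈ dom ∂f*, x₀ ∈ ∂f*(x₀*). Then the tangent cone T_{∂f*(x₀*)}(x₀) is contained in the graphical derivative D∂f*(x₀*, x₀)(0); moreover, if ∂f is metrically subregular at (x₀, x₀*), then equality holds. -/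
/-!
The inclusion holds for any set-valued map, because `{x₀*} × ∂f*(x₀*)` lies in the graph
of `∂f*`. For the converse, Fenchel–Moreau (obtained by separating points from the closed convex
epigraph of `f`) makes `∂f*` the inverse of `∂f`, so metric subregularity of `∂f` at `(x₀, x₀*)`
is calmness of `∂f*` at `(x₀*, x₀)`. If `x₀ + bₖ ∈ ∂f*(x₀* + aₖ)` with `cₖ aₖ → 0` and
`cₖ bₖ → v`, calmness moves `x₀ + bₖ` into `∂f*(x₀*)` at a cost `κ ‖aₖ‖ = o(1 / cₖ)`, which does
not change the limiting direction `v`.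
-/

open Set Filter Metric EMetric
open scoped InnerProductSpace ENNReal NNReal Topology

theorem EReal.coe_sub_le_coe_iff {a β : ℝ} {y : EReal} :
    (a : EReal) - y ≤ β ↔ ((a - β : ℝ) : EReal) ≤ y := by
  induction y using EReal.rec with
  | bot => simp [-EReal.coe_sub]
  | top => simp
  | coe y => norm_cast; constructor <;> intro h <;> linarith

section Epigraph

variable {E : Type*} {f : E → EReal}

def epigraph (f : E → EReal) : Set (E × ℝ) := {p | f p.1 ≤ p.2}

theorem convex_epigraph [AddCommGroup E] [Module ℝ E]
    (hf : ∀ x y, ∀ a b : ℝ, 0 ≤ a → 0 ≤ b → a + b = 1 →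
      f (a • x + b • y) ≤ (a : EReal) * f x + (b : EReal) * f y) :
    Convex ℝ (epigraph f) := by
  intro p hp q hq a b ha hb hab
  calc f (a • p.1 + b • q.1) ≤ (a : EReal) * f p.1 + (b : EReal) * f q.1 :=
        hf _ _ a b ha hb hab
    _ ≤ (a : EReal) * p.2 + (b : EReal) * q.2 := by
        gcongr
        exacts [hp, hq]
    _ = ((a • p + b • q).2 : ℝ) := by simp [EReal.coe_add, EReal.coe_mul]

theorem isClosed_epigraph [TopologicalSpace E] (hf : LowerSemicontinuous f) :
    IsClosed (epigraph f) :=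
  hf.isClosed_epigraph.preimage
    (continuous_fst.prodMk (continuous_coe_real_ereal.comp continuous_snd))

end Epigraph

section Separation

variable {E : Type*} [NormedAddCommGroup E] [InnerProductSpace ℝ E] {S : Set (E × ℝ)}

/-- The affine function `x ↦ ⟪w, x⟫ - β` lies below `S ⊆ E × ℝ`. -/
def IsAffineMinorant (S : Set (E × ℝ)) (w : E) (β : ℝ) : Prop :=
  ∀ q ∈ S, ⟪w, q.1⟫_ℝ - q.2 ≤ β

theorem exists_inner_add_mul_separation [CompleteSpace E] (hconv : Convex ℝ S)
    (hclosed : IsClosed S) {p : E × ℝ} (hp : p ∉ S) :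
    ∃ (w : E) (s c : ℝ),
      (∀ q ∈ S, ⟪w, q.1⟫_ℝ + q.2 * s < c) ∧ c < ⟪w, p.1⟫_ℝ + p.2 * s := by
  obtain ⟨L, c, hS, hp⟩ := geometric_hahn_banach_closed_point hconv hclosed hp
  set w := (InnerProductSpace.toDual ℝ E).symm (L.comp (ContinuousLinearMap.inl ℝ E ℝ))
  have hL : ∀ q : E × ℝ, L q = ⟪w, q.1⟫_ℝ + q.2 * L (0, 1) := fun q => by
    have hq : q = (q.1, 0) + q.2 • ((0 : E), (1 : ℝ)) := by ext <;> simp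
    rw [hq, map_add, map_smul, InnerProductSpace.toDual_symm_apply]
    simp
  exact ⟨w, L (0, 1), c, fun q hq => hL q ▸ hS q hq, hL p ▸ hp⟩

theorem nonpos_of_forall_inner_add_mul_lt
    (hup : ∀ x (r r' : ℝ), (x, r) ∈ S → r ≤ r' → (x, r') ∈ S) {q : E × ℝ} (hq : q ∈ S)
    {w : E} {s c : ℝ} (hsep : ∀ q ∈ S, ⟪w, q.1⟫_ℝ + q.2 * s < c) : s ≤ 0 := by
  by_contra! hs
  set r := max q.2 ((c - ⟪w, q.1⟫_ℝ) / s)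
  have hlt := hsep (q.1, r) (hup q.1 q.2 r hq (le_max_left _ _))
  have hge : c - ⟪w, q.1⟫_ℝ ≤ r * s := (div_le_iff₀ hs).1 (le_max_right _ _)
  simp only at hlt
  linarith

theorem exists_isAffineMinorant_of_inner_add_mul_lt {w : E} {s c : ℝ} (hs : s < 0)
    (hsep : ∀ q ∈ S, ⟪w, q.1⟫_ℝ + q.2 * s < c) {p : E × ℝ}
    (hp : c < ⟪w, p.1⟫_ℝ + p.2 * s) :
    ∃ w' β, IsAffineMinorant S w' β ∧ β + p.2 < ⟪w', p.1⟫_ℝ := by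
  have hs' : 0 < -s := neg_pos.2 hs
  refine ⟨(-s)⁻¹ • w, c / -s, fun q hq => ?_, ?_⟩
  · rw [real_inner_smul_left, ← div_eq_inv_mul, div_sub' hs'.ne',
      div_le_div_iff_of_pos_right hs']
    linarith [hsep q hq]
  · rw [real_inner_smul_left, ← div_eq_inv_mul, div_add' _ _ _ hs'.ne',
      div_lt_div_iff_of_pos_right hs']
    linarith

/-- Tilting an affine minorant by a vertical separating hyperplane. -/
theorem exists_isAffineMinorant_of_inner_lt {w₀ : E} {β₀ : ℝ}
    (hmin : IsAffineMinorant S w₀ β₀)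
    {w u : E} {c : ℝ} (hsep : ∀ q ∈ S, ⟪w, q.1⟫_ℝ < c) (hu : c < ⟪w, u⟫_ℝ) (α : ℝ) :
    ∃ w' β, IsAffineMinorant S w' β ∧ β + α < ⟪w', u⟫_ℝ := by
  obtain ⟨m, hm⟩ := exists_nat_gt ((β₀ + α - ⟪w₀, u⟫_ℝ) / (⟪w, u⟫_ℝ - c))
  have hm' : β₀ + α - ⟪w₀, u⟫_ℝ < m * (⟪w, u⟫_ℝ - c) :=
    (div_lt_iff₀ (sub_pos.2 hu)).1 hm
  refine ⟨w₀ + (m : ℝ) • w, β₀ + m * c, fun q hq => ?_, ?_⟩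
  · rw [inner_add_left, real_inner_smul_left]
    nlinarith [hmin q hq, hsep q hq, m.cast_nonneg (α := ℝ)]
  · rw [inner_add_left, real_inner_smul_left]
    linarith

theorem exists_isAffineMinorant_add_lt_inner [CompleteSpace E] (hconv : Convex ℝ S)
    (hclosed : IsClosed S) (hup : ∀ x (r r' : ℝ), (x, r) ∈ S → r ≤ r' → (x, r') ∈ S)
    (hline : ∀ x, ∃ r, (x, r) ∉ S) {u : E} {α : ℝ} (hu : (u, α) ∉ S) :
    ∃ w β, IsAffineMinorant S w β ∧ β + α < ⟪w, u⟫_ℝ := by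
  rcases S.eq_empty_or_nonempty with rfl | ⟨q, hq⟩
  · exact ⟨0, -α - 1, fun _ h => h.elim, by rw [inner_zero_left]; linarith⟩
  obtain ⟨r₀, hr₀⟩ := hline q.1
  obtain ⟨w₀, s₀, c₀, hsep₀, hc₀⟩ := exists_inner_add_mul_separation hconv hclosed hr₀
  have hs₀ : s₀ < 0 := by
    refine (nonpos_of_forall_inner_add_mul_lt hup hq hsep₀).lt_of_ne fun h => ?_
    have := hsep₀ q hq
    simp only [h, mul_zero, add_zero] at this hc₀
    exact this.not_gt hc₀
  obtain ⟨w₁, β₁, hmin₁, -⟩ := exists_isAffineMinorant_of_inner_add_mul_lt hs₀ hsep₀ hc₀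
  obtain ⟨w, s, c, hsep, hc⟩ := exists_inner_add_mul_separation hconv hclosed hu
  rcases (nonpos_of_forall_inner_add_mul_lt hup hq hsep).lt_or_eq with hs | rfl
  · exact exists_isAffineMinorant_of_inner_add_mul_lt hs hsep hc
  · simp only [mul_zero, add_zero] at hsep hc
    exact exists_isAffineMinorant_of_inner_lt hmin₁ hsep hc α

end Separation

section FenchelConjugate

variable {E : Type*} [NormedAddCommGroup E] [InnerProductSpace ℝ E] {f : E → EReal}

noncomputable def fenchelConj (f : E → EReal) (v : E) : EReal :=
  ⨆ x, ((⟪v, x⟫_ℝ : EReal) - f x)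

def subdiff (f : E → EReal) (x : E) : Set E :=
  {s | ∀ y, f x + ((⟪s, y - x⟫_ℝ : ℝ) : EReal) ≤ f y}

theorem fenchelConj_le_coe_iff {v : E} {β : ℝ} :
    fenchelConj f v ≤ β ↔ ∀ x, ((⟪v, x⟫_ℝ - β : ℝ) : EReal) ≤ f x := by
  simp only [fenchelConj, iSup_le_iff, EReal.coe_sub_le_coe_iff]

theorem fenchelConj_le_coe_of_isAffineMinorant {v : E} {β : ℝ}
    (h : IsAffineMinorant (epigraph f) v β) : fenchelConj f v ≤ β := by
  refine fenchelConj_le_coe_iff.2 fun x => not_lt.1 fun hlt => ?_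
  obtain ⟨r, hfr, hr⟩ := EReal.lt_iff_exists_real_btwn.1 hlt
  have hxr := h (x, r) hfr.le
  have hr' : r < ⟪v, x⟫_ℝ - β := EReal.coe_lt_coe_iff.1 hr
  linarith

theorem coe_inner_sub_le_fenchelConj {p : E × ℝ} (hp : p ∈ epigraph f) (v : E) :
    ((⟪v, p.1⟫_ℝ - p.2 : ℝ) : EReal) ≤ fenchelConj f v :=
  calc ((⟪v, p.1⟫_ℝ - p.2 : ℝ) : EReal) ≤ (⟪v, p.1⟫_ℝ : EReal) - f p.1 :=
        by rw [EReal.coe_sub]; exact EReal.sub_le_sub le_rfl hp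
    _ ≤ fenchelConj f v := le_iSup (fun x => ((⟪v, x⟫_ℝ : EReal) - f x)) p.1

theorem bot_lt_fenchelConj (hf : ∃ x, f x < ⊤) (v : E) : ⊥ < fenchelConj f v := by
  obtain ⟨x, hx⟩ := hf
  obtain ⟨r, hr, -⟩ := EReal.lt_iff_exists_real_btwn.1 hx
  exact (EReal.bot_lt_coe _).trans_le
    (coe_inner_sub_le_fenchelConj (p := (x, r)) hr.le v)

/-- Fenchel–Moreau: a lower semicontinuous convex function with values in `(-∞, ∞]` is the
supremum of the affine functions `x ↦ ⟪w, x⟫ - f* w` lying below it. -/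
theorem exists_fenchelConj_add_lt_inner [CompleteSpace E] (hbot : ∀ x, ⊥ < f x)
    (hconvex : ∀ x y, ∀ a b : ℝ, 0 ≤ a → 0 ≤ b → a + b = 1 →
      f (a • x + b • y) ≤ (a : EReal) * f x + (b : EReal) * f y)
    (hlsc : LowerSemicontinuous f) {u : E} {α : ℝ} (hα : (α : EReal) < f u) :
    ∃ w, fenchelConj f w + α < ⟪w, u⟫_ℝ := by
  have hup : ∀ x (r r' : ℝ), (x, r) ∈ epigraph f → r ≤ r' → (x, r') ∈ epigraph f :=
    fun _ _ _ hr hrr' => le_trans hr (EReal.coe_le_coe_iff.2 hrr')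
  have hline : ∀ x, ∃ r : ℝ, (x, r) ∉ epigraph f := fun x => by
    obtain ⟨r, -, hr⟩ := EReal.lt_iff_exists_real_btwn.1 (hbot x)
    exact ⟨r, hr.not_ge⟩
  obtain ⟨w, β, hmin, hβ⟩ := exists_isAffineMinorant_add_lt_inner (convex_epigraph hconvex)
    (isClosed_epigraph hlsc) hup hline (u := u) (α := α) hα.not_ge
  refine ⟨w, ?_⟩
  calc fenchelConj f w + α ≤ (β : EReal) + α := by
        gcongr; exact fenchelConj_le_coe_of_isAffineMinorant hmin
    _ < ⟪w, u⟫_ℝ := by exact_mod_cast hβ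

theorem mem_subdiff_fenchelConj_of_mem_subdiff {u v : E} (h : v ∈ subdiff f u) :
    u ∈ subdiff (fenchelConj f) v := by
  intro w
  induction hu : f u using EReal.rec with
  | bot =>
    have : fenchelConj f w = ⊤ := by
      refine top_le_iff.1 ?_
      calc (⊤ : EReal) = (⟪w, u⟫_ℝ : EReal) - f u := by rw [hu, EReal.coe_sub_bot]
        _ ≤ fenchelConj f w := le_iSup (fun x => ((⟪w, x⟫_ℝ : EReal) - f x)) u
    rw [this]
    exact le_top
  | top =>
    have : fenchelConj f v = ⊥ := by
      refine le_bot_iff.1 (iSup_le fun y => ?_)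
      have hy := h y
      rw [hu, EReal.top_add_coe, top_le_iff] at hy
      rw [hy, EReal.sub_top]
    rw [this, EReal.bot_add]
    exact bot_le
  | coe r =>
    have hv : fenchelConj f v ≤ ((⟪v, u⟫_ℝ - r : ℝ) : EReal) := by
      refine fenchelConj_le_coe_iff.2 fun y => ?_
      have hy := h y
      rw [hu, ← EReal.coe_add, inner_sub_right] at hy
      convert hy using 2
      ring
    calc fenchelConj f v + ((⟪u, w - v⟫_ℝ : ℝ) : EReal)
        ≤ ((⟪v, u⟫_ℝ - r : ℝ) : EReal) + ((⟪u, w - v⟫_ℝ : ℝ) : EReal) := by gcongr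
      _ = ((⟪w, (u, r).1⟫_ℝ - (u, r).2 : ℝ) : EReal) := by
        rw [← EReal.coe_add, inner_sub_right, real_inner_comm u w, real_inner_comm u v]
        ring_nf
      _ ≤ fenchelConj f w := coe_inner_sub_le_fenchelConj hu.le w

theorem mem_subdiff_of_mem_subdiff_fenchelConj [CompleteSpace E] (hbot : ∀ x, ⊥ < f x)
    (htop : ∃ x, f x < ⊤)
    (hconvex : ∀ x y, ∀ a b : ℝ, 0 ≤ a → 0 ≤ b → a + b = 1 →
      f (a • x + b • y) ≤ (a : EReal) * f x + (b : EReal) * f y)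
    (hlsc : LowerSemicontinuous f) {u v : E} (h : u ∈ subdiff (fenchelConj f) v) :
    v ∈ subdiff f u := by
  have hfin : fenchelConj f v ≠ ⊤ := by
    obtain ⟨α, -, hα⟩ := EReal.lt_iff_exists_real_btwn.1 (hbot u)
    obtain ⟨w, hw⟩ := exists_fenchelConj_add_lt_inner hbot hconvex hlsc hα
    intro hv
    have hw' := h w
    rw [hv, EReal.top_add_coe, top_le_iff] at hw'
    rw [hw', EReal.top_add_coe] at hw
    exact not_top_lt hw
  set s := (fenchelConj f v).toReal
  have hs : fenchelConj f v = s :=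
    (EReal.coe_toReal hfin (bot_lt_fenchelConj htop v).ne').symm
  -- Fenchel–Moreau at `u` against the subgradient inequality of `f*` at `v`
  have hfu : f u ≤ ((⟪v, u⟫_ℝ - s : ℝ) : EReal) := by
    by_contra! hlt
    obtain ⟨w, hw⟩ := exists_fenchelConj_add_lt_inner hbot hconvex hlsc hlt
    have hsub := h w
    rw [hs, ← EReal.coe_add] at hsub
    have hcontra : ((⟪u, w⟫_ℝ : ℝ) : EReal) < ⟪w, u⟫_ℝ :=
      calc ((⟪u, w⟫_ℝ : ℝ) : EReal)
          = ((s + ⟪u, w - v⟫_ℝ : ℝ) : EReal) + ((⟪v, u⟫_ℝ - s : ℝ) : EReal) := by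
            rw [← EReal.coe_add, inner_sub_right, real_inner_comm u v]; ring_nf
        _ ≤ fenchelConj f w + ((⟪v, u⟫_ℝ - s : ℝ) : EReal) := by gcongr
        _ < ⟪w, u⟫_ℝ := hw
    rw [real_inner_comm] at hcontra
    exact lt_irrefl _ hcontra
  intro y
  calc f u + ((⟪v, y - u⟫_ℝ : ℝ) : EReal)
      ≤ ((⟪v, u⟫_ℝ - s : ℝ) : EReal) + ((⟪v, y - u⟫_ℝ : ℝ) : EReal) := by gcongr
    _ = ((⟪v, y⟫_ℝ - s : ℝ) : EReal) := by rw [← EReal.coe_add, inner_sub_right]; ring_nf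
    _ ≤ f y := fenchelConj_le_coe_iff.1 hs.le y

end FenchelConjugate

section SetValued

theorem tangentConeAt_subset_graph {𝕜 E F : Type*} [Semiring 𝕜] [AddCommGroup E] [Module 𝕜 E]
    [TopologicalSpace E] [ContinuousAdd E] [ContinuousConstSMul 𝕜 E] [AddCommGroup F]
    [Module 𝕜 F] [TopologicalSpace F] [ContinuousAdd F] [ContinuousConstSMul 𝕜 F]
    (Φ : E → Set F) (x₀ : E) (y₀ : F) :
    tangentConeAt 𝕜 (Φ x₀) y₀ ⊆
      {v | ((0 : E), v) ∈ tangentConeAt 𝕜 {p : E × F | p.2 ∈ Φ p.1} (x₀, y₀)} :=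
  fun v hv => tangentConeAt_mono (by rintro ⟨x, y⟩ ⟨rfl, hy⟩; exact hy)
    (subset_tangentConeAt_prod_right (s := {x₀}) (subset_closure rfl) ⟨v, hv, rfl⟩)

theorem exists_mem_dist_lt_of_infEDist_le {X : Type*} [PseudoMetricSpace X] {x : X} {s : Set X}
    {r δ : ℝ} (hr : 0 ≤ r) (hδ : 0 < δ) (h : infEDist x s ≤ ENNReal.ofReal r) :
    ∃ y ∈ s, dist x y < r + δ := by
  obtain ⟨y, hy, hxy⟩ := infEDist_lt_iff.1
    (h.trans_lt ((ENNReal.ofReal_lt_ofReal_iff (by linarith)).2 (lt_add_of_pos_right r hδ)))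
  exact ⟨y, hy, edist_lt_ofReal.1 hxy⟩

variable {X Y : Type*} [PseudoEMetricSpace X] [PseudoEMetricSpace Y]

def IsCalmAt (Φ : X → Set Y) (x₀ : X) (y₀ : Y) : Prop :=
  ∃ κ : ℝ≥0, ∀ᶠ p in 𝓝 (x₀, y₀), p.2 ∈ Φ p.1 → infEDist p.2 (Φ x₀) ≤ κ * edist p.1 x₀

def IsMetricallySubregularAt (Ψ : Y → Set X) (y₀ : Y) (x₀ : X) : Prop :=
  ∃ κ : ℝ≥0, ∀ᶠ y in 𝓝 y₀, infEDist y {u | x₀ ∈ Ψ u} ≤ κ * infEDist x₀ (Ψ y)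

theorem IsMetricallySubregularAt.isCalmAt {Φ : X → Set Y} {Ψ : Y → Set X} {x₀ : X} {y₀ : Y}
    (hinv : ∀ x y, y ∈ Φ x ↔ x ∈ Ψ y) (h : IsMetricallySubregularAt Ψ y₀ x₀) :
    IsCalmAt Φ x₀ y₀ := by
  obtain ⟨κ, hκ⟩ := h
  have hΦ : Φ x₀ = {u | x₀ ∈ Ψ u} := Set.ext fun y => hinv x₀ y
  refine ⟨κ, ((continuous_snd.tendsto (x₀, y₀)).eventually hκ).mono fun p hp hmem => ?_⟩
  calc infEDist p.2 (Φ x₀) ≤ κ * infEDist x₀ (Ψ p.2) := hΦ ▸ hp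
    _ ≤ κ * edist p.1 x₀ := by
      rw [edist_comm]
      gcongr
      exact infEDist_le_edist_of_mem ((hinv _ _).1 hmem)

variable {𝕜 F : Type*} [NontriviallyNormedField 𝕜] [NormedAddCommGroup F] [NormedSpace 𝕜 F]

theorem mem_tangentConeAt_of_tendsto_smul_sub {s : Set F} {y v : F} {c : ℕ → 𝕜} {d z : ℕ → F}
    (hc : Tendsto (‖c ·‖) atTop atTop) (hcd : Tendsto (fun k => c k • d k) atTop (𝓝 v))
    (hz : ∀ᶠ k in atTop, z k ∈ s)
    (hzd : Tendsto (fun k => c k • (z k - (y + d k))) atTop (𝓝 0)) :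
    v ∈ tangentConeAt 𝕜 s y := by
  refine mem_tangentConeAt_iff_exists_seq_norm_tendsto_atTop.2
    ⟨c, fun k => z k - y, hc, hz.mono fun k hk => by simpa using hk, ?_⟩
  have hsum := hcd.add hzd
  rw [add_zero] at hsum
  exact hsum.congr fun k => by rw [← smul_add, sub_add_eq_sub_sub, add_sub_cancel]

variable {E : Type*} [NormedAddCommGroup E] [NormedSpace ℝ E] [NormedSpace ℝ F]

theorem IsCalmAt.mem_tangentConeAt {Φ : E → Set F} {x₀ : E} {y₀ : F} (h : IsCalmAt Φ x₀ y₀)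
    {v : F} (hv : ((0 : E), v) ∈ tangentConeAt ℝ {p : E × F | p.2 ∈ Φ p.1} (x₀, y₀)) :
    v ∈ tangentConeAt ℝ (Φ x₀) y₀ := by
  obtain ⟨κ, hκ⟩ := h
  obtain ⟨c, d, hc, hd, hcd⟩ := mem_tangentConeAt_iff_exists_seq_norm_tendsto_atTop.1 hv
  have hca : Tendsto (fun k => c k • (d k).1) atTop (𝓝 0) :=
    (continuous_fst.tendsto _).comp hcd
  have hcb : Tendsto (fun k => c k • (d k).2) atTop (𝓝 v) :=
    (continuous_snd.tendsto _).comp hcd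
  have hnear : Tendsto (fun k => (x₀, y₀) + d k) atTop (𝓝 (x₀, y₀)) := by
    simpa using tendsto_const_nhds.add (tangentConeAt.lim_zero atTop hc hcd)
  have happrox : ∀ᶠ k in atTop, ∃ z ∈ Φ x₀,
      ‖c k • (z - (y₀ + (d k).2))‖ ≤ κ * ‖c k • (d k).1‖ + 1 / ((k : ℝ) + 1) := by
    filter_upwards [hd, hnear.eventually hκ, hc.eventually_gt_atTop 0] with k hmem hcalm hck
    have hdist : infEDist (y₀ + (d k).2) (Φ x₀) ≤ ENNReal.ofReal (κ * ‖(d k).1‖) := by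
      simpa [edist_dist, ENNReal.ofReal_mul] using hcalm hmem
    obtain ⟨z, hz, hlt⟩ := exists_mem_dist_lt_of_infEDist_le (by positivity)
      (by positivity : 0 < 1 / (‖c k‖ * ((k : ℝ) + 1))) hdist
    refine ⟨z, hz, ?_⟩
    calc ‖c k • (z - (y₀ + (d k).2))‖ = ‖c k‖ * dist (y₀ + (d k).2) z := by
          rw [norm_smul, dist_comm, dist_eq_norm]
      _ ≤ ‖c k‖ * (κ * ‖(d k).1‖ + 1 / (‖c k‖ * ((k : ℝ) + 1))) := by gcongr
      _ = κ * ‖c k • (d k).1‖ + 1 / ((k : ℝ) + 1) := by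
          rw [norm_smul]; field_simp
  obtain ⟨z, hz⟩ := happrox.choice
  refine mem_tangentConeAt_of_tendsto_smul_sub hc hcb (hz.mono fun k hk => hk.1) ?_
  refine squeeze_zero_norm' (hz.mono fun k hk => hk.2) ?_
  simpa using (hca.norm.const_mul (κ : ℝ)).add tendsto_one_div_add_atTop_nhds_zero_nat

end SetValued

theorem tangent_cone_subset_graphical_derivative_general
    (n : ℕ) (f : EuclideanSpace ℝ (Fin n) → EReal)
    (hproper_bot : ∀ x, ⊥ < f x) (hproper_top : ∃ x, f x < ⊤)
    (hconvex : ∀ x y, ∀ a b : ℝ, 0 ≤ a → 0 ≤ b → a + b = 1 →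
      f (a • x + b • y) ≤ (a : EReal) * f x + (b : EReal) * f y)
    (hlsc : LowerSemicontinuous f)
    (fconj : EuclideanSpace ℝ (Fin n) → EReal)
    (hfconj : ∀ v, fconj v = ⨆ x, ((⟪v, x⟫_ℝ : EReal) - f x))
    (subf : EuclideanSpace ℝ (Fin n) → Set (EuclideanSpace ℝ (Fin n)))
    (hsubf : ∀ x, subf x = {s | ∀ y, f x + ((⟪s, y - x⟫_ℝ : ℝ) : EReal) ≤ f y})
    (subfconj : EuclideanSpace ℝ (Fin n) → Set (EuclideanSpace ℝ (Fin n)))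
    (hsubfconj : ∀ v, subfconj v = {x | ∀ w, fconj v + ((⟪x, w - v⟫_ℝ : ℝ) : EReal) ≤ fconj w})
    (xs x₀ : EuclideanSpace ℝ (Fin n)) :
    (tangentConeAt ℝ (subfconj xs) x₀ ⊆
        {v | ((0 : EuclideanSpace ℝ (Fin n)), v) ∈
          tangentConeAt ℝ {p : EuclideanSpace ℝ (Fin n) × EuclideanSpace ℝ (Fin n) |
            p.2 ∈ subfconj p.1} (xs, x₀)}) ∧
      ((∃ κ : ℝ≥0, ∃ ε > (0 : ℝ), ∀ x ∈ Metric.ball x₀ ε,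
          infEdist x {u | xs ∈ subf u} ≤ (κ : ℝ≥0∞) * infEdist xs (subf x)) →
        tangentConeAt ℝ (subfconj xs) x₀ =
          {v | ((0 : EuclideanSpace ℝ (Fin n)), v) ∈
            tangentConeAt ℝ {p : EuclideanSpace ℝ (Fin n) × EuclideanSpace ℝ (Fin n) |
              p.2 ∈ subfconj p.1} (xs, x₀)}) := by
  obtain rfl : fconj = fenchelConj f := funext hfconj
  obtain rfl : subf = subdiff f := funext hsubf
  obtain rfl : subfconj = subdiff (fenchelConj f) := funext hsubfconj
  have hinv : ∀ v u, u ∈ subdiff (fenchelConj f) v ↔ v ∈ subdiff f u := fun _ _ =>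
    ⟨mem_subdiff_of_mem_subdiff_fenchelConj hproper_bot hproper_top hconvex hlsc,
      mem_subdiff_fenchelConj_of_mem_subdiff⟩
  refine ⟨tangentConeAt_subset_graph _ xs x₀, fun ⟨κ, ε, hε, hsubreg⟩ => ?_⟩
  have hcalm : IsCalmAt (subdiff (fenchelConj f)) xs x₀ :=
    IsMetricallySubregularAt.isCalmAt hinv ⟨κ, eventually_of_mem (ball_mem_nhds x₀ hε) hsubreg⟩
  exact (tangentConeAt_subset_graph _ xs x₀).antisymm fun v hv => hcalm.mem_tangentConeAt hv

/-- For proper lsc convex `f` and `x₀ ∈ ∂f*(x₀*)`, the tangent cone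
`T_{∂f*(x₀*)}(x₀)` is contained in the graphical derivative `D∂f*(x₀*, x₀)(0)`, with
equality if `∂f` is metrically subregular at `(x₀, x₀*)`. -/
theorem tangent_cone_subset_graphical_derivative
    (n : ℕ) (f : EuclideanSpace ℝ (Fin n) → EReal)
    (hproper_bot : ∀ x, ⊥ < f x) (hproper_top : ∃ x, f x < ⊤)
    (hconvex : ∀ x y, ∀ a b : ℝ, 0 ≤ a → 0 ≤ b → a + b = 1 →
      f (a • x + b • y) ≤ (a : EReal) * f x + (b : EReal) * f y)
    (hlsc : LowerSemicontinuous f)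
    (fconj : EuclideanSpace ℝ (Fin n) → EReal)
    (hfconj : ∀ v, fconj v = ⨆ x, ((⟪v, x⟫_ℝ : EReal) - f x))
    (subf : EuclideanSpace ℝ (Fin n) → Set (EuclideanSpace ℝ (Fin n)))
    (hsubf : ∀ x, subf x = {s | ∀ y, f x + ((⟪s, y - x⟫_ℝ : ℝ) : EReal) ≤ f y})
    (subfconj : EuclideanSpace ℝ (Fin n) → Set (EuclideanSpace ℝ (Fin n)))
    (hsubfconj : ∀ v, subfconj v = {x | ∀ w, fconj v + ((⟪x, w - v⟫_ℝ : ℝ) : EReal) ≤ fconj w})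
    (xs x₀ : EuclideanSpace ℝ (Fin n)) (hx₀ : x₀ ∈ subfconj xs) :
    (tangentConeAt ℝ (subfconj xs) x₀ ⊆
        {v | ((0 : EuclideanSpace ℝ (Fin n)), v) ∈
          tangentConeAt ℝ {p : EuclideanSpace ℝ (Fin n) × EuclideanSpace ℝ (Fin n) |
            p.2 ∈ subfconj p.1} (xs, x₀)}) ∧
      ((∃ κ : ℝ≥0, ∃ ε > (0 : ℝ), ∀ x ∈ Metric.ball x₀ ε,
          infEdist x {u | xs ∈ subf u} ≤ (κ : ℝ≥0∞) * infEdist xs (subf x)) →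
        tangentConeAt ℝ (subfconj xs) x₀ =
          {v | ((0 : EuclideanSpace ℝ (Fin n)), v) ∈
            tangentConeAt ℝ {p : EuclideanSpace ℝ (Fin n) × EuclideanSpace ℝ (Fin n) |
              p.2 ∈ subfconj p.1} (xs, x₀)}) :=
  tangent_cone_subset_graphical_derivative_general n f hproper_bot hproper_top hconvex hlsc fconj
    hfconj subf hsubf subfconj hsubfconj xs x₀
end

section
/- Let x₀ ∈ ℝⁿ with support I = supp(x₀), and consider J = ‖·‖₁. For any h ∈ ℝⁿ, the directional derivative of ‖·‖₁ at x₀ in direction h equals Σ_{i∈I} sign(x₀ᵢ) hᵢ + Σ_{i∉I} |hᵢ|. Consequently the critical cone is C̃_{‖·‖₁}(x₀) = {h : Σ_{i∈I} sign(x₀ᵢ) hᵢ + Σ_{i∉I} |hᵢ| ≤ 0}, and x₀ (feasible for Ax = b₀) is a sharp solution of min{‖x‖₁ : Ax = b₀} if and only if Σ_{i∈I} sign(x₀ᵢ) hᵢ + Σ_{i∉I} |hᵢ| > 0 for all h ∈ Ker A \ {0}. -/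
/-!
Coordinatewise, `|a + t b| = |a| + t sign(a) b` as soon as `t |b| < |a|`, and `|0 + t b| = t |b|`;
so for small `t > 0` the difference quotient of `‖·‖₁` at `x₀` along `h` is constant, equal to
`φ h = Σ_{i∈I} sign(x₀ᵢ) hᵢ + Σ_{i∉I} |hᵢ|`. The subgradient inequality `sign(a) b ≤ |a + b| - |a|`
gives moreover `φ h ≤ ‖x₀ + h‖₁ - ‖x₀‖₁` for every `h`.

A sharp solution forces `φ h ≥ κ ‖h‖` along `Ker A`. Conversely, `φ` is continuous and positively
homogeneous, so if it is positive on `Ker A \ {0}` it has a positive minimum `κ` on the compact unit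
sphere of `Ker A`, and then `κ ‖x - x₀‖ ≤ φ (x - x₀) ≤ ‖x‖₁ - ‖x₀‖₁` on the whole feasible set.
-/

open Set Filter
open scoped Topology Classical

namespace Real

theorem sign_mul_self (a : ℝ) : sign a * a = |a| := by
  rcases lt_trichotomy a 0 with ha | rfl | ha
  · rw [sign_of_neg ha, abs_of_neg ha]; ring
  · simp
  · rw [sign_of_pos ha, abs_of_pos ha]; ring

theorem abs_sign_le_one (a : ℝ) : |sign a| ≤ 1 := by
  rcases sign_apply_eq a with h | h | h <;> simp [h]

theorem sign_mul_le_abs_add_sub_abs (a b : ℝ) : sign a * b ≤ |a + b| - |a| := by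
  have : sign a * (a + b) ≤ |a + b| :=
    (le_abs_self _).trans <| by
      rw [abs_mul]; exact mul_le_of_le_one_left (abs_nonneg _) (abs_sign_le_one a)
  rw [mul_add, sign_mul_self] at this
  linarith

theorem abs_add_eq_of_abs_lt {a b : ℝ} (hb : |b| < |a|) : |a + b| = |a| + sign a * b := by
  rcases lt_trichotomy a 0 with ha | rfl | ha
  · rw [sign_of_neg ha, abs_of_neg ha] at *
    rw [abs_of_neg (by linarith [le_abs_self b])]; ring
  · simp at hb; linarith [abs_nonneg b]
  · rw [sign_of_pos ha, abs_of_pos ha] at *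
    rw [abs_of_pos (by linarith [neg_abs_le b])]; ring

end Real

section L1

variable {ι : Type*} [Fintype ι] [DecidableEq ι] {I : Finset ι} {x₀ : ι → ℝ}

noncomputable def l1DirDeriv (I : Finset ι) (x₀ h : ι → ℝ) : ℝ :=
  ∑ i ∈ I, Real.sign (x₀ i) * h i + ∑ i ∈ Iᶜ, |h i|

theorem continuous_l1DirDeriv (I : Finset ι) (x₀ : ι → ℝ) : Continuous (l1DirDeriv I x₀) := by
  unfold l1DirDeriv; fun_prop

theorem l1DirDeriv_smul (I : Finset ι) (x₀ h : ι → ℝ) {c : ℝ} (hc : 0 ≤ c) :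
    l1DirDeriv I x₀ (c • h) = c * l1DirDeriv I x₀ h := by
  simp only [l1DirDeriv, Pi.smul_apply, smul_eq_mul, abs_mul, abs_of_nonneg hc, mul_add,
    Finset.mul_sum, mul_left_comm c]

theorem l1DirDeriv_le_sum_abs_add_sub (hI : ∀ i, i ∈ I ↔ x₀ i ≠ 0) (h : ι → ℝ) :
    l1DirDeriv I x₀ h ≤ ∑ i, |x₀ i + h i| - ∑ i, |x₀ i| := by
  rw [← Finset.sum_sub_distrib, ← Finset.sum_add_sum_compl I]
  refine add_le_add (Finset.sum_le_sum fun i _ => Real.sign_mul_le_abs_add_sub_abs _ _)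
    (Finset.sum_le_sum fun i hi => ?_)
  have : x₀ i = 0 := not_not.1 fun h => Finset.mem_compl.1 hi ((hI i).2 h)
  simp [this]

theorem sum_abs_add_mul_eq (hI : ∀ i, i ∈ I ↔ x₀ i ≠ 0) {h : ι → ℝ} {t : ℝ} (ht : 0 ≤ t)
    (hsmall : ∀ i ∈ I, t * |h i| < |x₀ i|) :
    ∑ i, |x₀ i + t * h i| = ∑ i, |x₀ i| + t * l1DirDeriv I x₀ h := by
  rw [← Finset.sum_add_sum_compl I, ← Finset.sum_add_sum_compl I (fun i => |x₀ i|), l1DirDeriv,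
    mul_add, Finset.mul_sum, Finset.mul_sum]
  have hon : ∀ i ∈ I, |x₀ i + t * h i| = |x₀ i| + t * (Real.sign (x₀ i) * h i) := fun i hi => by
    rw [Real.abs_add_eq_of_abs_lt (by rw [abs_mul, abs_of_nonneg ht]; exact hsmall i hi)]; ring
  have hoff : ∀ i ∈ Iᶜ, |x₀ i + t * h i| = |x₀ i| + t * |h i| := fun i hi => by
    have : x₀ i = 0 := not_not.1 fun h => Finset.mem_compl.1 hi ((hI i).2 h)
    simp [this, abs_mul, abs_of_nonneg ht]
  rw [Finset.sum_congr rfl hon, Finset.sum_congr rfl hoff, Finset.sum_add_distrib,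
    Finset.sum_add_distrib]
  ring

theorem tendsto_slope_sum_abs (hI : ∀ i, i ∈ I ↔ x₀ i ≠ 0) (h : ι → ℝ) :
    Tendsto (fun t : ℝ => (∑ i, |x₀ i + t * h i| - ∑ i, |x₀ i|) / t) (𝓝[>] 0)
      (𝓝 (l1DirDeriv I x₀ h)) := by
  have hsmall : ∀ᶠ t in 𝓝[>] (0 : ℝ), ∀ i ∈ I, t * |h i| < |x₀ i| := by
    rw [eventually_all_finset]
    intro i hi
    have : Tendsto (fun t : ℝ => t * |h i|) (𝓝[>] 0) (𝓝 0) :=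
      ((continuous_mul_const _).tendsto' 0 0 (zero_mul _)).mono_left nhdsWithin_le_nhds
    exact this.eventually_lt_const (abs_pos.2 ((hI i).1 hi))
  refine tendsto_const_nhds.congr' ?_
  filter_upwards [hsmall, self_mem_nhdsWithin] with t hst (ht : 0 < t)
  rw [sum_abs_add_mul_eq hI ht.le hst]
  field_simp
  ring

end L1

section Sharp

variable {E : Type*} [NormedAddCommGroup E] [NormedSpace ℝ E]

def IsSharpMinOn (f : E → ℝ) (s : Set E) (x₀ : E) : Prop :=
  ∃ κ > 0, ∃ δ > 0, ∀ x ∈ s, ‖x - x₀‖ ≤ δ → κ * ‖x - x₀‖ ≤ f x - f x₀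

theorem IsSharpMinOn.pos_of_tendsto_slope {f : E → ℝ} {s : Set E} {x₀ h : E} {d : ℝ}
    (hf : IsSharpMinOn f s x₀) (hs : ∀ t : ℝ, x₀ + t • h ∈ s)
    (hd : Tendsto (fun t : ℝ => (f (x₀ + t • h) - f x₀) / t) (𝓝[>] 0) (𝓝 d)) (hh : h ≠ 0) :
    0 < d := by
  obtain ⟨κ, hκ, δ, hδ, hsharp⟩ := hf
  have hnorm : 0 < ‖h‖ := norm_pos_iff.2 hh
  have hslope : ∀ᶠ t in 𝓝[>] (0 : ℝ), κ * ‖h‖ ≤ (f (x₀ + t • h) - f x₀) / t := by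
    filter_upwards [Ioo_mem_nhdsGT (div_pos hδ hnorm)] with t ⟨ht, htδ⟩
    have hdist : ‖x₀ + t • h - x₀‖ = t * ‖h‖ := by
      rw [add_sub_cancel_left, norm_smul, Real.norm_of_nonneg ht.le]
    have := hsharp _ (hs t) (by rw [hdist]; exact ((lt_div_iff₀ hnorm).1 htδ).le)
    rw [hdist] at this
    rw [le_div_iff₀ ht]
    linarith
  exact (mul_pos hκ hnorm).trans_le (ge_of_tendsto hd hslope)

variable [ProperSpace E]

theorem exists_pos_mul_norm_le_of_pos {K : Submodule ℝ E} (hK : IsClosed (K : Set E))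
    {φ : E → ℝ} (hφ : Continuous φ) (hφ_smul : ∀ c : ℝ, 0 ≤ c → ∀ h, φ (c • h) = c * φ h)
    (hpos : ∀ h ∈ K, h ≠ 0 → 0 < φ h) :
    ∃ κ > 0, ∀ h ∈ K, κ * ‖h‖ ≤ φ h := by
  obtain ⟨κ, hκ, hmin⟩ := ((isCompact_sphere (0 : E) 1).inter_left hK).exists_forall_le'
    hφ.continuousOn fun u ⟨huK, hu⟩ => hpos u huK (ne_zero_of_mem_unit_sphere ⟨u, hu⟩)
  refine ⟨κ, hκ, fun h hK => ?_⟩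
  rcases eq_or_ne h 0 with rfl | hh
  · simpa using (hφ_smul 0 le_rfl 0).ge
  have hh' : ‖h‖ ≠ 0 := norm_ne_zero_iff.2 hh
  have hu : ‖h‖⁻¹ • h ∈ (K : Set E) ∩ Metric.sphere 0 1 :=
    ⟨K.smul_mem _ hK, by
      rw [mem_sphere_zero_iff_norm, norm_smul, norm_inv, norm_norm, inv_mul_cancel₀ hh']⟩
  calc κ * ‖h‖ ≤ φ (‖h‖⁻¹ • h) * ‖h‖ := by gcongr; exact hmin _ hu
    _ = φ h := by
      rw [mul_comm, ← hφ_smul _ (norm_nonneg h), smul_inv_smul₀ hh']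

theorem isSharpMinOn_of_pos {K : Submodule ℝ E} (hK : IsClosed (K : Set E)) {f φ : E → ℝ}
    {s : Set E} {x₀ : E} (hs : ∀ x ∈ s, x - x₀ ∈ K) (hφ : Continuous φ)
    (hφ_smul : ∀ c : ℝ, 0 ≤ c → ∀ h, φ (c • h) = c * φ h) (hpos : ∀ h ∈ K, h ≠ 0 → 0 < φ h)
    (hφ_le : ∀ h, φ h ≤ f (x₀ + h) - f x₀) :
    IsSharpMinOn f s x₀ := by
  obtain ⟨κ, hκ, hκφ⟩ := exists_pos_mul_norm_le_of_pos hK hφ hφ_smul hpos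
  refine ⟨κ, hκ, 1, one_pos, fun x hx _ => ?_⟩
  simpa using (hκφ _ (hs x hx)).trans (hφ_le (x - x₀))

end Sharp

/-- For `J = ‖·‖₁` and `I = supp x₀`: the directional derivative of
`‖·‖₁` at `x₀` in direction `h` is `Σ_{i∈I} sign(x₀ᵢ) hᵢ + Σ_{i∉I} |hᵢ|`; consequently a
feasible `x₀` is a sharp solution of `min {‖x‖₁ : Ax = b₀}` iff this quantity is positive
for every `h ∈ Ker A \ {0}`. -/
theorem l1_directional_derivative_and_sharp_solution
    (n m : ℕ)
    (l1 : EuclideanSpace ℝ (Fin n) → ℝ) (hl1 : ∀ x, l1 x = ∑ i, |x i|)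
    (A : EuclideanSpace ℝ (Fin n) →L[ℝ] EuclideanSpace ℝ (Fin m))
    (b₀ : EuclideanSpace ℝ (Fin m))
    (x₀ : EuclideanSpace ℝ (Fin n)) (hfeas : A x₀ = b₀)
    (I : Finset (Fin n)) (hI : I = Finset.univ.filter (fun i => x₀ i ≠ 0)) :
    (∀ h : EuclideanSpace ℝ (Fin n),
      Tendsto (fun t : ℝ => (l1 (x₀ + t • h) - l1 x₀) / t) (𝓝[>] (0 : ℝ))
        (𝓝 (∑ i ∈ I, Real.sign (x₀ i) * h i + ∑ i ∈ Iᶜ, |h i|))) ∧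
    ((∃ κ > (0 : ℝ), ∃ δ > (0 : ℝ), ∀ x, A x = b₀ → ‖x - x₀‖ ≤ δ →
        κ * ‖x - x₀‖ ≤ l1 x - l1 x₀) ↔
      (∀ h : EuclideanSpace ℝ (Fin n), A h = 0 → h ≠ 0 →
        0 < ∑ i ∈ I, Real.sign (x₀ i) * h i + ∑ i ∈ Iᶜ, |h i|)) := by
  have hsupp : ∀ i, i ∈ I ↔ x₀ i ≠ 0 := by simp [hI]
  have hderiv (h : EuclideanSpace ℝ (Fin n)) :
      Tendsto (fun t : ℝ => (l1 (x₀ + t • h) - l1 x₀) / t) (𝓝[>] 0)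
        (𝓝 (l1DirDeriv I x₀ h)) := by
    simpa only [hl1, PiLp.add_apply, PiLp.smul_apply, smul_eq_mul] using
      tendsto_slope_sum_abs hsupp h
  change (∀ h : EuclideanSpace ℝ (Fin n), Tendsto _ _ (𝓝 (l1DirDeriv I x₀ h))) ∧
    (IsSharpMinOn l1 {x | A x = b₀} x₀ ↔
      ∀ h : EuclideanSpace ℝ (Fin n), A h = 0 → h ≠ 0 → 0 < l1DirDeriv I x₀ h)
  refine ⟨hderiv, fun hsharp h hAh hh => hsharp.pos_of_tendsto_slope (fun t => ?_) (hderiv h) hh,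
    fun hpos => isSharpMinOn_of_pos A.isClosed_ker (fun x hx => ?_) ?_ ?_ hpos fun h => ?_⟩
  · simp [hAh, hfeas]
  · simpa [hfeas, sub_eq_zero] using hx
  · exact (continuous_l1DirDeriv I x₀).comp (PiLp.continuous_ofLp 2 _)
  · exact fun c hc h => l1DirDeriv_smul I x₀ h hc
  · simpa only [hl1, PiLp.add_apply] using l1DirDeriv_le_sum_abs_add_sub hsupp h
end

section
/- Let x₀ ∈ ℝⁿ₊ be feasible for Ax = b₀ with support I. Then x₀ is a sharp solution of the nonnegative ℓ₁ problem min{‖x‖₁ : Ax = b₀, x ≥ 0} if and only if for every h ∈ Ker A \ {0}, either hᵢ < 0 for some i ∉ I, or (h_{I^c} ≥ 0 implies Σ_{i∈I} hᵢ + Σ_{i∈I^c} hᵢ > 0). -/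
/-!
Let `K = {h : A h = 0, hᵢ ≥ 0 for i ∉ I}` be the cone of feasible directions at `x₀`: for every
nonnegative feasible `x` we have `x - x₀ ∈ K`, and conversely for `h ∈ K` the point `x₀ + t h` is
nonnegative and feasible for all small `t > 0`. On nonnegative vectors `‖·‖₁` is the linear
functional `σ x = ∑ xᵢ`, so `‖x‖₁ - ‖x₀‖₁ = σ (x - x₀)` and sharpness means `σ ≥ κ ‖·‖` near `0`
on `K`. Testing this on `x₀ + t h` gives `σ > 0` on `K \ {0}`, which is the stated condition.
Conversely, `K` is a closed cone, so `σ` attains a positive minimum `κ` on the compact set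
`K ∩ {‖h‖ = 1}`, and by homogeneity `σ h ≥ κ ‖h‖` on all of `K`.
-/

open Set Filter Topology
open scoped Classical

theorem exists_pos_mul_norm_le_of_pos_on_cone {E : Type*} [NormedAddCommGroup E]
    [NormedSpace ℝ E] [ProperSpace E] {C : Set E} (hC : IsClosed C)
    (hsmul : ∀ h ∈ C, ∀ t : ℝ, 0 < t → t • h ∈ C) (f : StrongDual ℝ E)
    (hf : ∀ h ∈ C, h ≠ 0 → 0 < f h) : ∃ κ > 0, ∀ h ∈ C, κ * ‖h‖ ≤ f h := by
  have hS : IsCompact (Metric.sphere (0 : E) 1 ∩ C) := (isCompact_sphere 0 1).inter_right hC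
  obtain ⟨κ, hκ, hκS⟩ := hS.exists_forall_le' f.continuous.continuousOn
    fun u ⟨hu, huC⟩ => hf u huC (ne_zero_of_mem_unit_sphere ⟨u, hu⟩)
  refine ⟨κ, hκ, fun h hh => ?_⟩
  rcases eq_or_ne h 0 with rfl | h0
  · simp
  have hnorm : 0 < ‖h‖ := norm_pos_iff.mpr h0
  have hunit : ‖h‖⁻¹ • h ∈ Metric.sphere (0 : E) 1 ∩ C :=
    ⟨by rw [mem_sphere_zero_iff_norm]; exact norm_smul_inv_norm h0,
      hsmul h hh _ (inv_pos.mpr hnorm)⟩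
  have := hκS _ hunit
  rwa [map_smul, smul_eq_mul, le_inv_mul_iff₀ hnorm, mul_comm] at this

theorem sum_abs_sub_sum_abs_of_nonneg {ι : Type*} [Fintype ι] {x y : ι → ℝ}
    (hx : ∀ i, 0 ≤ x i) (hy : ∀ i, 0 ≤ y i) :
    ∑ i, |x i| - ∑ i, |y i| = ∑ i, (x i - y i) := by
  simp only [abs_of_nonneg (hx _), abs_of_nonneg (hy _), Finset.sum_sub_distrib]

theorem eventually_nonneg_add_mul {ι : Type*} [Finite ι] {x₀ h : ι → ℝ} {I : Set ι}
    (hx₀ : ∀ i, 0 ≤ x₀ i) (hI : ∀ i ∈ I, 0 < x₀ i) (hh : ∀ i ∉ I, 0 ≤ h i) :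
    ∀ᶠ t in 𝓝[>] (0 : ℝ), ∀ i, 0 ≤ x₀ i + t * h i := by
  refine eventually_all.mpr fun i => ?_
  by_cases hi : i ∈ I
  · have hcont : Tendsto (fun t : ℝ => x₀ i + t * h i) (𝓝 0) (𝓝 (x₀ i)) :=
      (by fun_prop : Continuous fun t : ℝ => x₀ i + t * h i).tendsto' 0 _ (by simp)
    exact nhdsWithin_le_nhds ((hcont.eventually (lt_mem_nhds (hI i hi))).mono fun _ => le_of_lt)
  · filter_upwards [self_mem_nhdsWithin] with t (ht : 0 < t)
    exact add_nonneg (hx₀ i) (mul_nonneg ht.le (hh i hi))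

section FeasibleDirections

variable {ι F : Type*} [NormedAddCommGroup F] [NormedSpace ℝ F]
  (A : EuclideanSpace ℝ ι →L[ℝ] F) (I : Finset ι)

def feasibleDirections : Set (EuclideanSpace ℝ ι) :=
  {h | A h = 0 ∧ ∀ i ∉ I, 0 ≤ h i}

theorem isClosed_feasibleDirections : IsClosed (feasibleDirections A I) := by
  simp only [feasibleDirections, ofPred_and, ofPred_forall]
  exact (isClosed_singleton.preimage A.continuous).inter <| isClosed_iInter fun i =>
    isClosed_iInter fun _ => isClosed_le continuous_const (EuclideanSpace.proj i).continuous

theorem smul_mem_feasibleDirections {h : EuclideanSpace ℝ ι} (hh : h ∈ feasibleDirections A I)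
    {t : ℝ} (ht : 0 ≤ t) : t • h ∈ feasibleDirections A I :=
  ⟨by rw [map_smul, hh.1, smul_zero], fun i hi => mul_nonneg ht (hh.2 i hi)⟩

variable {A I}

theorem sub_mem_feasibleDirections {x x₀ : EuclideanSpace ℝ ι} (hx₀ : ∀ i ∉ I, x₀ i = 0)
    (hx : ∀ i, 0 ≤ x i) (hAx : A x = A x₀) : x - x₀ ∈ feasibleDirections A I :=
  ⟨by rw [map_sub, hAx, sub_self], fun i hi => by simpa [hx₀ i hi] using hx i⟩

theorem sum_pos_of_sharp [Fintype ι] {x₀ : EuclideanSpace ℝ ι} (hx₀ : ∀ i, 0 ≤ x₀ i)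
    (hI : ∀ i ∈ I, 0 < x₀ i) {κ δ : ℝ} (hκ : 0 < κ) (hδ : 0 < δ)
    (hsharp : ∀ x, A x = A x₀ → (∀ i, 0 ≤ x i) → ‖x - x₀‖ ≤ δ → κ * ‖x - x₀‖ ≤ ∑ i, (x - x₀) i)
    {h : EuclideanSpace ℝ ι} (hh : h ∈ feasibleDirections A I) (h0 : h ≠ 0) :
    0 < ∑ i, h i := by
  have hsmall : ∀ᶠ t in 𝓝[>] (0 : ℝ), ‖t • h‖ ≤ δ := by
    have : Tendsto (fun t : ℝ => ‖t • h‖) (𝓝 0) (𝓝 0) := by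
      simpa using ((continuous_id.smul continuous_const).tendsto' 0 (0 : EuclideanSpace ℝ ι)
        (zero_smul ℝ h)).norm
    exact nhdsWithin_le_nhds (this.eventually (ge_mem_nhds hδ))
  obtain ⟨t, hnn, hδt, ht⟩ := ((eventually_nonneg_add_mul hx₀ hI hh.2).and
    (hsmall.and self_mem_nhdsWithin)).exists
  have := hsharp (x₀ + t • h) (by rw [map_add, map_smul, hh.1, smul_zero, add_zero]) hnn
    (by rwa [add_sub_cancel_left])
  simp only [add_sub_cancel_left, norm_smul, Real.norm_of_nonneg (le_of_lt ht), PiLp.smul_apply,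
    smul_eq_mul, ← Finset.mul_sum] at this
  have hκh : 0 < κ * (t * ‖h‖) := by have := norm_pos_iff.mpr h0; positivity
  exact pos_of_mul_pos_right (hκh.trans_le this) (le_of_lt ht)

theorem exists_pos_mul_norm_sub_le_of_sum_pos [Fintype ι] {x₀ : EuclideanSpace ℝ ι}
    (hx₀ : ∀ i ∉ I, x₀ i = 0) (hK : ∀ h ∈ feasibleDirections A I, h ≠ 0 → 0 < ∑ i, h i) :
    ∃ κ > 0, ∀ x, A x = A x₀ → (∀ i, 0 ≤ x i) → κ * ‖x - x₀‖ ≤ ∑ i, (x - x₀) i := by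
  obtain ⟨κ, hκ, hbound⟩ := exists_pos_mul_norm_le_of_pos_on_cone
    (isClosed_feasibleDirections A I) (fun h hh t ht => smul_mem_feasibleDirections A I hh ht.le)
    (∑ i, EuclideanSpace.proj i) (by simpa using hK)
  exact ⟨κ, hκ, fun x hAx hx => by
    simpa using hbound _ (sub_mem_feasibleDirections hx₀ hx hAx)⟩

end FeasibleDirections

/-- Let `x₀ ≥ 0` be feasible for `Ax = b₀` with support `I`. Then `x₀`
is a sharp solution of `min {‖x‖₁ : Ax = b₀, x ≥ 0}` iff for every `h ∈ Ker A \ {0}`,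
either `hᵢ < 0` for some `i ∉ I`, or (`h_{I^c} ≥ 0` implies `Σ_{i∈I} hᵢ + Σ_{i∈I^c} hᵢ > 0`). -/
theorem nonneg_l1_sharp_solution_characterization
    (n m : ℕ)
    (l1 : EuclideanSpace ℝ (Fin n) → ℝ) (hl1 : ∀ x, l1 x = ∑ i, |x i|)
    (A : EuclideanSpace ℝ (Fin n) →L[ℝ] EuclideanSpace ℝ (Fin m))
    (b₀ : EuclideanSpace ℝ (Fin m))
    (x₀ : EuclideanSpace ℝ (Fin n)) (hpos : ∀ i, 0 ≤ x₀ i) (hfeas : A x₀ = b₀)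
    (I : Finset (Fin n)) (hI : I = Finset.univ.filter (fun i => x₀ i ≠ 0)) :
    (∃ κ > (0 : ℝ), ∃ δ > (0 : ℝ), ∀ x, A x = b₀ → (∀ i, 0 ≤ x i) → ‖x - x₀‖ ≤ δ →
        κ * ‖x - x₀‖ ≤ l1 x - l1 x₀) ↔
      (∀ h : EuclideanSpace ℝ (Fin n), A h = 0 → h ≠ 0 →
        (∃ i ∉ I, h i < 0) ∨ ((∀ i ∉ I, 0 ≤ h i) → 0 < ∑ i ∈ I, h i + ∑ i ∈ Iᶜ, h i)) := by
  have hsupp : ∀ i ∈ I, 0 < x₀ i := fun i hi => (hpos i).lt_of_ne' (by simpa [hI] using hi)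
  have hzero : ∀ i ∉ I, x₀ i = 0 := fun i hi => by simpa [hI] using hi
  have hgap : ∀ x : EuclideanSpace ℝ (Fin n), (∀ i, 0 ≤ x i) →
      l1 x - l1 x₀ = ∑ i, (x - x₀) i := fun x hx => by
    simp only [hl1, sum_abs_sub_sum_abs_of_nonneg hx hpos, PiLp.sub_apply]
  have hcond : (∀ h : EuclideanSpace ℝ (Fin n), A h = 0 → h ≠ 0 →
      (∃ i ∉ I, h i < 0) ∨ ((∀ i ∉ I, 0 ≤ h i) → 0 < ∑ i ∈ I, h i + ∑ i ∈ Iᶜ, h i)) ↔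
      ∀ h ∈ feasibleDirections A I, h ≠ 0 → 0 < ∑ i, h i := by
    simp only [feasibleDirections, Finset.sum_add_sum_compl, mem_ofPred_eq]
    grind
  rw [hcond]
  constructor
  · rintro ⟨κ, hκ, δ, hδ, hsharp⟩ h hh h0
    exact sum_pos_of_sharp hpos hsupp hκ hδ (fun x hAx hx hδx =>
      hgap x hx ▸ hsharp x (hAx.trans hfeas) hx hδx) hh h0
  · intro hK
    obtain ⟨κ, hκ, hsharp⟩ := exists_pos_mul_norm_sub_le_of_sum_pos hzero hK
    exact ⟨κ, hκ, 1, one_pos, fun x hAx hx _ => hgap x hx ▸ hsharp x (hAx.trans hfeas.symm) hx⟩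
end

section
/- Let D ∈ ℝ^{n×p}, x₀ feasible for Ax = b₀, and set I⁺ = {i : (D^T x₀)ᵢ > 0}, I⁻ = {i : (D^T x₀)ᵢ < 0}, I⁰ = {i : (D^T x₀)ᵢ = 0}. Then the directional derivative of J(x) = ‖D^T x‖₁ at x₀ in direction h equals Σ_{i∈I⁺}(D^T h)ᵢ - Σ_{i∈I⁻}(D^T h)ᵢ + Σ_{i∈I⁰}|(D^T h)ᵢ|, and x₀ is a sharp solution (equivalently, the unique solution) of min{‖D^T x‖₁ : Ax = b₀} if and only if Σ_{i∈I⁺}(D^T h)ᵢ + Σ_{i∈I⁰}|(D^T h)ᵢ| > Σ_{i∈I⁻}(D^T h)ᵢ for all h ∈ Ker A \ {0}. -/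
open Set Filter
open scoped Topology Classical

/-- For `J(x) = ‖Dᵀx‖₁` (analysis ℓ₁), with
`I⁺ = {i : (Dᵀx₀)ᵢ > 0}`, `I⁻ = {i : (Dᵀx₀)ᵢ < 0}`, `I⁰ = {i : (Dᵀx₀)ᵢ = 0}`: the
directional derivative of `J` at `x₀` in direction `h` is
`Σ_{I⁺}(Dᵀh)ᵢ - Σ_{I⁻}(Dᵀh)ᵢ + Σ_{I⁰}|(Dᵀh)ᵢ|`, and a feasible `x₀` is a sharp solution
(equivalently the unique solution) of `min {‖Dᵀx‖₁ : Ax = b₀}` iff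
`Σ_{I⁺}(Dᵀh)ᵢ + Σ_{I⁰}|(Dᵀh)ᵢ| > Σ_{I⁻}(Dᵀh)ᵢ` for all `h ∈ Ker A \ {0}`. -/
theorem analysis_l1_directional_derivative_and_sharp
    (n p m : ℕ) (D : Matrix (Fin n) (Fin p) ℝ)
    (DT : EuclideanSpace ℝ (Fin n) → Fin p → ℝ)
    (hDT : ∀ x i, DT x i = ∑ j, D j i * x j)
    (J : EuclideanSpace ℝ (Fin n) → ℝ) (hJ : ∀ x, J x = ∑ i, |DT x i|)
    (A : EuclideanSpace ℝ (Fin n) →L[ℝ] EuclideanSpace ℝ (Fin m))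
    (b₀ : EuclideanSpace ℝ (Fin m))
    (x₀ : EuclideanSpace ℝ (Fin n)) (hfeas : A x₀ = b₀)
    (Iplus Iminus Izero : Finset (Fin p))
    (hIp : Iplus = Finset.univ.filter (fun i => 0 < DT x₀ i))
    (hIm : Iminus = Finset.univ.filter (fun i => DT x₀ i < 0))
    (hIz : Izero = Finset.univ.filter (fun i => DT x₀ i = 0)) :
    (∀ h : EuclideanSpace ℝ (Fin n),
      Tendsto (fun t : ℝ => (J (x₀ + t • h) - J x₀) / t) (𝓝[>] (0 : ℝ))
        (𝓝 (∑ i ∈ Iplus, DT h i - ∑ i ∈ Iminus, DT h i + ∑ i ∈ Izero, |DT h i|))) ∧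
    ((∃ κ > (0 : ℝ), ∃ δ > (0 : ℝ), ∀ x, A x = b₀ → ‖x - x₀‖ ≤ δ →
        κ * ‖x - x₀‖ ≤ J x - J x₀) ↔
      (∀ h : EuclideanSpace ℝ (Fin n), A h = 0 → h ≠ 0 →
        ∑ i ∈ Iminus, DT h i < ∑ i ∈ Iplus, DT h i + ∑ i ∈ Izero, |DT h i|)) ∧
    ((∀ x, A x = b₀ → x ≠ x₀ → J x₀ < J x) ↔
      (∀ h : EuclideanSpace ℝ (Fin n), A h = 0 → h ≠ 0 →
        ∑ i ∈ Iminus, DT h i < ∑ i ∈ Iplus, DT h i + ∑ i ∈ Izero, |DT h i|)) := by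
  -- abbreviation for the directional derivative
  set Φ : EuclideanSpace ℝ (Fin n) → ℝ := fun h =>
    ∑ i ∈ Iplus, DT h i - ∑ i ∈ Iminus, DT h i + ∑ i ∈ Izero, |DT h i| with hΦ
  -- linearity of DT
  have hadd : ∀ x y : EuclideanSpace ℝ (Fin n), ∀ i, DT (x + y) i = DT x i + DT y i := by
    intro x y i
    simp [hDT, mul_add, Finset.sum_add_distrib]
  have hsmul : ∀ (t : ℝ) (x : EuclideanSpace ℝ (Fin n)) (i), DT (t • x) i = t * DT x i := by
    intro t x i
    simp only [hDT, Finset.mul_sum, PiLp.smul_apply, smul_eq_mul]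
    exact Finset.sum_congr rfl fun j _ => by ring
  have hDT0 : ∀ i, DT 0 i = 0 := by
    intro i
    simp [hDT]
  -- membership
  have hmemp : ∀ i ∈ Iplus, 0 < DT x₀ i := by
    intro i hi; rw [hIp] at hi; simpa using hi
  have hmemm : ∀ i ∈ Iminus, DT x₀ i < 0 := by
    intro i hi; rw [hIm] at hi; simpa using hi
  have hmemz : ∀ i ∈ Izero, DT x₀ i = 0 := by
    intro i hi; rw [hIz] at hi; simpa using hi
  -- partition of sums
  have hpart : ∀ g : Fin p → ℝ,
      ∑ i, g i = ∑ i ∈ Iplus, g i + ∑ i ∈ Iminus, g i + ∑ i ∈ Izero, g i := by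
    intro g
    have e0 := (Finset.sum_filter_add_sum_filter_not Finset.univ
      (fun i => 0 < DT x₀ i) g).symm
    have e0' := (Finset.sum_filter_add_sum_filter_not
      (Finset.univ.filter (fun i => ¬ 0 < DT x₀ i)) (fun i => DT x₀ i < 0) g).symm
    have e1 : (Finset.univ.filter (fun i => ¬ 0 < DT x₀ i)).filter
        (fun i => DT x₀ i < 0) = Iminus := by
      rw [hIm]; ext i
      simp only [Finset.mem_filter, Finset.mem_univ, true_and]
      constructor
      · rintro ⟨_, h2⟩; exact h2
      · intro h2; exact ⟨by linarith, h2⟩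
    have e2 : (Finset.univ.filter (fun i => ¬ 0 < DT x₀ i)).filter
        (fun i => ¬ DT x₀ i < 0) = Izero := by
      rw [hIz]; ext i
      simp only [Finset.mem_filter, Finset.mem_univ, true_and]
      constructor
      · rintro ⟨h1, h2⟩; linarith
      · intro h1; constructor <;> simp [h1]
    rw [e0, e0', e1, e2, hIp, add_assoc]
  -- value of J at x₀
  have hJx₀ : J x₀ = ∑ i ∈ Iplus, DT x₀ i - ∑ i ∈ Iminus, DT x₀ i := by
    rw [hJ, hpart (fun i => |DT x₀ i|)]
    have a1 : ∑ i ∈ Iplus, |DT x₀ i| = ∑ i ∈ Iplus, DT x₀ i :=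
      Finset.sum_congr rfl fun i hi => abs_of_pos (hmemp i hi)
    have a2 : ∑ i ∈ Iminus, |DT x₀ i| = -∑ i ∈ Iminus, DT x₀ i := by
      rw [← Finset.sum_neg_distrib]
      exact Finset.sum_congr rfl fun i hi => abs_of_neg (hmemm i hi)
    have a3 : ∑ i ∈ Izero, |DT x₀ i| = 0 :=
      Finset.sum_eq_zero fun i hi => by rw [hmemz i hi]; simp
    rw [a1, a2, a3]; ring
  -- eventual exact linearization
  have hEq : ∀ h : EuclideanSpace ℝ (Fin n),
      ∀ᶠ t in 𝓝[>] (0 : ℝ), J (x₀ + t • h) - J x₀ = t * Φ h := by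
    intro h
    have keyp : ∀ᶠ t in 𝓝[>] (0 : ℝ), ∀ i ∈ Iplus, 0 < DT x₀ i + t * DT h i := by
      rw [Finset.eventually_all]
      intro i hi
      have htend : Tendsto (fun t : ℝ => DT x₀ i + t * DT h i) (𝓝[>] 0)
          (𝓝 (DT x₀ i + 0 * DT h i)) :=
        ((continuous_const.add (continuous_id.mul continuous_const)).tendsto 0).mono_left
          nhdsWithin_le_nhds
      exact htend.eventually_const_lt (by simpa using hmemp i hi)
    have keym : ∀ᶠ t in 𝓝[>] (0 : ℝ), ∀ i ∈ Iminus, DT x₀ i + t * DT h i < 0 := by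
      rw [Finset.eventually_all]
      intro i hi
      have htend : Tendsto (fun t : ℝ => DT x₀ i + t * DT h i) (𝓝[>] 0)
          (𝓝 (DT x₀ i + 0 * DT h i)) :=
        ((continuous_const.add (continuous_id.mul continuous_const)).tendsto 0).mono_left
          nhdsWithin_le_nhds
      exact htend.eventually_lt_const (by simpa using hmemm i hi)
    have keyt : ∀ᶠ t in 𝓝[>] (0 : ℝ), 0 < t := eventually_mem_nhdsWithin
    filter_upwards [keyp, keym, keyt] with t hp hm ht
    have hDTt : ∀ i, DT (x₀ + t • h) i = DT x₀ i + t * DT h i := fun i => by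
      rw [hadd, hsmul]
    have b1 : ∑ i ∈ Iplus, |DT (x₀ + t • h) i| = ∑ i ∈ Iplus, (DT x₀ i + t * DT h i) :=
      Finset.sum_congr rfl fun i hi => by rw [hDTt]; exact abs_of_pos (hp i hi)
    have b2 : ∑ i ∈ Iminus, |DT (x₀ + t • h) i|
        = ∑ i ∈ Iminus, -(DT x₀ i + t * DT h i) :=
      Finset.sum_congr rfl fun i hi => by rw [hDTt]; exact abs_of_neg (hm i hi)
    have b3 : ∑ i ∈ Izero, |DT (x₀ + t • h) i| = ∑ i ∈ Izero, t * |DT h i| :=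
      Finset.sum_congr rfl fun i hi => by
        rw [hDTt, hmemz i hi, zero_add, abs_mul, abs_of_pos ht]
    rw [hJ (x₀ + t • h), hpart (fun i => |DT (x₀ + t • h) i|), b1, b2, b3, hJx₀, hΦ]
    simp only [Finset.sum_add_distrib, Finset.sum_neg_distrib, ← Finset.mul_sum]
    ring
  -- subadditivity: J x ≥ J x₀ + Φ (x - x₀)
  have hsub : ∀ x : EuclideanSpace ℝ (Fin n), J x₀ + Φ (x - x₀) ≤ J x := by
    intro x
    have hx : ∀ i, DT x i = DT x₀ i + DT (x - x₀) i := fun i => by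
      rw [← hadd]; congr 1; abel
    have c1 : ∑ i ∈ Iplus, (DT x₀ i + DT (x - x₀) i) ≤ ∑ i ∈ Iplus, |DT x i| :=
      Finset.sum_le_sum fun i hi => by rw [hx]; exact le_abs_self _
    have c2 : ∑ i ∈ Iminus, -(DT x₀ i + DT (x - x₀) i) ≤ ∑ i ∈ Iminus, |DT x i| :=
      Finset.sum_le_sum fun i hi => by rw [hx]; exact neg_le_abs _
    have c3 : ∑ i ∈ Izero, |DT (x - x₀) i| ≤ ∑ i ∈ Izero, |DT x i| :=
      Finset.sum_le_sum fun i hi => le_of_eq (by rw [hx i, hmemz i hi, zero_add])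
    have hcomb := add_le_add (add_le_add c1 c2) c3
    rw [hJ x, hpart (fun i => |DT x i|), hJx₀, hΦ]
    simp only [Finset.sum_add_distrib, Finset.sum_neg_distrib] at hcomb ⊢
    linarith
  -- positive homogeneity of Φ
  have hhom : ∀ (t : ℝ), 0 ≤ t → ∀ h, Φ (t • h) = t * Φ h := by
    intro t ht h
    rw [hΦ]
    simp only [hsmul, abs_mul, abs_of_nonneg ht, ← Finset.mul_sum]
    ring
  have hΦ0 : Φ 0 = 0 := by rw [hΦ]; simp [hDT0]
  -- continuity of Φ
  have hDTc : ∀ i, Continuous fun h : EuclideanSpace ℝ (Fin n) => DT h i := by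
    intro i
    have : (fun h : EuclideanSpace ℝ (Fin n) => DT h i)
        = fun h => ∑ j, D j i * h j := funext fun x => hDT x i
    rw [this]
    exact continuous_finset_sum _ fun j _ =>
      continuous_const.mul (EuclideanSpace.proj j).continuous
  have hcont : Continuous Φ := by
    rw [hΦ]
    exact ((continuous_finset_sum _ fun i _ => hDTc i).sub
      (continuous_finset_sum _ fun i _ => hDTc i)).add
      (continuous_finset_sum _ fun i _ => (hDTc i).abs)
  -- coercivity from positivity on the kernel
  have main : (∀ h, A h = 0 → h ≠ 0 → 0 < Φ h) →
      ∃ κ > (0 : ℝ), ∀ h : EuclideanSpace ℝ (Fin n), A h = 0 → κ * ‖h‖ ≤ Φ h := by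
    intro hpos
    set S : Set (EuclideanSpace ℝ (Fin n)) := {h | A h = 0} ∩ Metric.sphere 0 1 with hS
    have hSmem : ∀ h : EuclideanSpace ℝ (Fin n), A h = 0 → h ≠ 0 → (‖h‖⁻¹ • h) ∈ S := by
      intro h hA hz
      have hn : ‖h‖ ≠ 0 := norm_ne_zero_iff.2 hz
      constructor
      · show A (‖h‖⁻¹ • h) = 0
        rw [map_smul, hA, smul_zero]
      · simp [norm_smul, abs_of_nonneg (inv_nonneg.2 (norm_nonneg h)),
          inv_mul_cancel₀ hn]
    by_cases hne : S.Nonempty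
    · obtain ⟨u, huS, humin⟩ :=
        ((isCompact_sphere (0 : EuclideanSpace ℝ (Fin n)) 1).inter_left
          (isClosed_eq A.continuous continuous_const)).exists_isMinOn hne
          hcont.continuousOn
      have hu0 : u ≠ 0 := by
        intro e
        have := huS.2
        rw [e] at this
        simp at this
      refine ⟨Φ u, hpos u huS.1 hu0, ?_⟩
      intro h hA
      by_cases hz : h = 0
      · rw [hz, hΦ0]; simp
      · have hn : (0 : ℝ) < ‖h‖ := norm_pos_iff.2 hz
        have hle : Φ u ≤ Φ (‖h‖⁻¹ • h) := humin (hSmem h hA hz)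
        rw [hhom _ (by positivity) h] at hle
        have := mul_le_mul_of_nonneg_right hle (le_of_lt hn)
        calc Φ u * ‖h‖ ≤ (‖h‖⁻¹ * Φ h) * ‖h‖ := this
          _ = Φ h := by field_simp
    · refine ⟨1, one_pos, ?_⟩
      intro h hA
      by_cases hz : h = 0
      · rw [hz, hΦ0]; simp
      · exact absurd ⟨_, hSmem h hA hz⟩ hne
  -- relate Φ to the stated inequality
  have hΦiff : ∀ h : EuclideanSpace ℝ (Fin n),
      (∑ i ∈ Iminus, DT h i < ∑ i ∈ Iplus, DT h i + ∑ i ∈ Izero, |DT h i|) ↔ 0 < Φ h := by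
    intro h
    have : Φ h = ∑ i ∈ Iplus, DT h i - ∑ i ∈ Iminus, DT h i + ∑ i ∈ Izero, |DT h i| := by
      rw [hΦ]
    rw [this]
    constructor <;> intro <;> linarith
  refine ⟨?_, ?_, ?_⟩
  · -- directional derivative
    intro h
    have heq : (fun t : ℝ => (J (x₀ + t • h) - J x₀) / t) =ᶠ[𝓝[>] (0 : ℝ)]
        fun _ => Φ h := by
      filter_upwards [hEq h, (eventually_mem_nhdsWithin :
        ∀ᶠ t in 𝓝[>] (0:ℝ), t ∈ Ioi 0)] with t he ht
      have ht' : (0:ℝ) < t := ht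
      rw [he, mul_comm, mul_div_assoc, div_self (ne_of_gt ht'), mul_one]
    exact Tendsto.congr' heq.symm tendsto_const_nhds
  · -- sharp ↔ condition
    constructor
    · rintro ⟨κ, hκ, δ, hδ, hsh⟩ h hA hz
      rw [hΦiff]
      have hn : (0 : ℝ) < ‖h‖ := norm_pos_iff.2 hz
      have hev : ∀ᶠ t in 𝓝[>] (0 : ℝ), t * ‖h‖ < δ := by
        have htend : Tendsto (fun t : ℝ => t * ‖h‖) (𝓝[>] 0) (𝓝 (0 * ‖h‖)) :=
          ((continuous_id.mul continuous_const).tendsto 0).mono_left nhdsWithin_le_nhds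
        exact htend.eventually_lt_const (by simpa using hδ)
      obtain ⟨t, he, ht, hδt⟩ := ((hEq h).and ((eventually_mem_nhdsWithin :
        ∀ᶠ t in 𝓝[>] (0:ℝ), t ∈ Ioi 0).and hev)).exists
      have hfeas' : A (x₀ + t • h) = b₀ := by
        rw [map_add, map_smul, hA, smul_zero, add_zero, hfeas]
      have hd : x₀ + t • h - x₀ = t • h := by abel
      have hnorm : ‖x₀ + t • h - x₀‖ = t * ‖h‖ := by
        rw [hd, norm_smul, Real.norm_eq_abs, abs_of_pos ht]
      have hsh' := hsh (x₀ + t • h) hfeas' (by rw [hnorm]; exact le_of_lt hδt)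
      rw [hnorm, he] at hsh'
      have ht' : (0:ℝ) < t := ht
      by_contra hcg
      push_neg at hcg
      nlinarith [mul_nonpos_of_nonneg_of_nonpos (le_of_lt ht') hcg,
        mul_pos hκ (mul_pos ht' hn)]
    · intro hC
      obtain ⟨κ, hκ, hco⟩ := main fun h hA hz => (hΦiff h).1 (hC h hA hz)
      refine ⟨κ, hκ, 1, one_pos, ?_⟩
      intro x hx _
      have hA : A (x - x₀) = 0 := by rw [map_sub, hx, hfeas, sub_self]
      have h1 := hco _ hA
      have h2 := hsub x
      linarith
  · -- unique ↔ condition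
    constructor
    · intro huniq h hA hz
      rw [hΦiff]
      by_contra hc
      push_neg at hc
      obtain ⟨t, he, ht⟩ := ((hEq h).and (eventually_mem_nhdsWithin :
        ∀ᶠ t in 𝓝[>] (0:ℝ), t ∈ Ioi 0)).exists
      have hfeas' : A (x₀ + t • h) = b₀ := by
        rw [map_add, map_smul, hA, smul_zero, add_zero, hfeas]
      have hne : x₀ + t • h ≠ x₀ := by
        intro e
        have : t • h = 0 := by
          have := congrArg (· - x₀) e
          simpa using this
        exact hz ((smul_eq_zero.1 this).resolve_left (ne_of_gt ht))
      have ht' : (0:ℝ) < t := ht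
      have := huniq _ hfeas' hne
      nlinarith
    · intro hC x hx hne
      have hA : A (x - x₀) = 0 := by rw [map_sub, hx, hfeas, sub_self]
      have hzz : x - x₀ ≠ 0 := sub_ne_zero.2 hne
      have h1 := (hΦiff _).1 (hC _ hA hzz)
      have h2 := hsub x
      linarith
end

section
/- Let C ∈ 𝒮ⁿ₊ (symmetric positive semidefinite) and define J(X) = ⟨C, X⟩ + I_{𝒮ⁿ₊}(X) on symmetric matrices. Then J is a gauge and its polar satisfies J°(Z) = inf{α ≥ 0 : αC - Z ∈ 𝒮ⁿ₊}. -/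
open Matrix
open scoped Classical

/-!
The PSD cone is a convex cone on which `X ↦ ⟨C, X⟩` is linear and nonnegative, so `J` is a gauge:
subadditive and positively homogeneous, hence convex. The polar formula is the self-duality of the
PSD cone: `⟨Z, X⟩ ≤ μ ⟨C, X⟩` for all `X ⪰ 0` iff `μ C - Z ⪰ 0`. The two sets of admissible
multipliers can differ only at `μ = 0` (where `0 * ⊤ = 0` in `EReal`), and since the set of `α`
with `α C - Z ⪰ 0` is upward closed, this does not affect the infima.
-/

namespace Matrix

open scoped ComplexOrder

variable {n : Type*}

theorem posSemidef_smul_iff {X : Matrix n n ℝ} {α : ℝ} (hα : 0 < α) :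
    (α • X).PosSemidef ↔ X.PosSemidef := by
  refine ⟨fun h => ?_, fun h => h.smul hα.le⟩
  simpa [smul_smul, inv_mul_cancel₀ hα.ne'] using h.smul (inv_nonneg.2 hα.le)

variable [Fintype n]

theorem trace_smul_sub_mul (μ : ℝ) (C Z X : Matrix n n ℝ) :
    ((μ • C - Z) * X).trace = μ * (C * X).trace - (Z * X).trace := by
  rw [Matrix.sub_mul, trace_sub, Matrix.smul_mul, trace_smul, smul_eq_mul]

variable {𝕜 : Type*} [RCLike 𝕜]

theorem PosSemidef.trace_mul_nonneg {A B : Matrix n n 𝕜} (hA : A.PosSemidef)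
    (hB : B.PosSemidef) : 0 ≤ (A * B).trace := by
  obtain ⟨D, rfl⟩ : ∃ D : Matrix n n 𝕜, B = star D * D := by
    open scoped MatrixOrder in exact CStarAlgebra.nonneg_iff_eq_star_mul_self.mp hB.nonneg
  rw [← Matrix.mul_assoc, trace_mul_comm, ← Matrix.mul_assoc, star_eq_conjTranspose]
  exact (hA.mul_mul_conjTranspose_same D).trace_nonneg

theorem trace_mul_vecMulVec_self_star (M : Matrix n n 𝕜) (x : n → 𝕜) :
    (M * vecMulVec x (star x)).trace = star x ⬝ᵥ M *ᵥ x := by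
  rw [mul_vecMulVec, trace_vecMulVec, dotProduct_comm]

theorem IsHermitian.posSemidef_iff_forall_trace_mul_nonneg {M : Matrix n n 𝕜}
    (hM : M.IsHermitian) :
    M.PosSemidef ↔ ∀ X : Matrix n n 𝕜, X.PosSemidef → 0 ≤ (M * X).trace := by
  refine ⟨fun h _ hX => h.trace_mul_nonneg hX, fun h => ?_⟩
  refine .of_dotProduct_mulVec_nonneg hM fun x => ?_
  simpa only [trace_mul_vecMulVec_self_star] using h _ (posSemidef_vecMulVec_self_star x)

end Matrix

section PsdConeGauge

variable {n : Type*} [Fintype n]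

/-- `X ↦ ⟨C, X⟩ + I_{𝒮ⁿ₊}(X)`. -/
noncomputable def psdConeGauge (C X : Matrix n n ℝ) : EReal :=
  if X.PosSemidef then ((C * X).trace : EReal) else ⊤

variable {C : Matrix n n ℝ}

theorem psdConeGauge_of_posSemidef {X : Matrix n n ℝ} (hX : X.PosSemidef) :
    psdConeGauge C X = ((C * X).trace : EReal) :=
  if_pos hX

theorem psdConeGauge_of_not_posSemidef {X : Matrix n n ℝ} (hX : ¬ X.PosSemidef) :
    psdConeGauge C X = ⊤ :=
  if_neg hX

theorem psdConeGauge_nonneg (hC : C.PosSemidef) (X : Matrix n n ℝ) : 0 ≤ psdConeGauge C X := by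
  by_cases hX : X.PosSemidef
  · rw [psdConeGauge_of_posSemidef hX]
    exact_mod_cast hC.trace_mul_nonneg hX
  · simp [psdConeGauge_of_not_posSemidef hX]

theorem psdConeGauge_zero : psdConeGauge C 0 = 0 := by
  simp [psdConeGauge_of_posSemidef PosSemidef.zero]

theorem psdConeGauge_smul {α : ℝ} (hα : 0 < α) (X : Matrix n n ℝ) :
    psdConeGauge C (α • X) = α * psdConeGauge C X := by
  by_cases hX : X.PosSemidef
  · rw [psdConeGauge_of_posSemidef hX, psdConeGauge_of_posSemidef ((posSemidef_smul_iff hα).2 hX),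
      Matrix.mul_smul, trace_smul, smul_eq_mul, EReal.coe_mul]
  · rw [psdConeGauge_of_not_posSemidef hX,
      psdConeGauge_of_not_posSemidef (mt (posSemidef_smul_iff hα).1 hX),
      EReal.coe_mul_top_of_pos hα]

theorem psdConeGauge_add_le (hC : C.PosSemidef) (X Y : Matrix n n ℝ) :
    psdConeGauge C (X + Y) ≤ psdConeGauge C X + psdConeGauge C Y := by
  by_cases hXY : X.PosSemidef ∧ Y.PosSemidef
  · obtain ⟨hX, hY⟩ := hXY
    rw [psdConeGauge_of_posSemidef (hX.add hY), psdConeGauge_of_posSemidef hX,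
      psdConeGauge_of_posSemidef hY, Matrix.mul_add, trace_add, EReal.coe_add]
  · have hX := psdConeGauge_nonneg hC X
    have hY := psdConeGauge_nonneg hC Y
    rcases not_and_or.1 hXY with hX' | hY'
    · rw [psdConeGauge_of_not_posSemidef hX', EReal.top_add_of_ne_bot (ne_bot_of_le_ne_bot
        EReal.zero_ne_bot hY)]
      exact le_top
    · rw [psdConeGauge_of_not_posSemidef hY', EReal.add_top_of_ne_bot (ne_bot_of_le_ne_bot
        EReal.zero_ne_bot hX)]
      exact le_top

theorem psdConeGauge_convex (hC : C.PosSemidef) (X Y : Matrix n n ℝ) {a b : ℝ} (ha : 0 ≤ a)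
    (hb : 0 ≤ b) (hab : a + b = 1) :
    psdConeGauge C (a • X + b • Y) ≤ a * psdConeGauge C X + b * psdConeGauge C Y := by
  rcases ha.eq_or_lt with rfl | ha
  · obtain rfl : b = 1 := by linarith
    simp
  rcases hb.eq_or_lt with rfl | hb
  · obtain rfl : a = 1 := by linarith
    simp
  calc psdConeGauge C (a • X + b • Y) ≤ psdConeGauge C (a • X) + psdConeGauge C (b • Y) :=
        psdConeGauge_add_le hC _ _
    _ = a * psdConeGauge C X + b * psdConeGauge C Y := by
        rw [psdConeGauge_smul ha, psdConeGauge_smul hb]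

theorem trace_mul_le_smul_psdConeGauge {Z : Matrix n n ℝ} {μ : ℝ} (hμ : 0 < μ)
    (h : (μ • C - Z).PosSemidef) (X : Matrix n n ℝ) :
    ((Z * X).trace : EReal) ≤ μ * psdConeGauge C X := by
  by_cases hX : X.PosSemidef
  · rw [psdConeGauge_of_posSemidef hX, ← EReal.coe_mul, EReal.coe_le_coe_iff]
    have := h.trace_mul_nonneg hX
    rw [trace_smul_sub_mul] at this
    linarith
  · simp [psdConeGauge_of_not_posSemidef hX, EReal.coe_mul_top_of_pos hμ]

theorem posSemidef_smul_sub_of_trace_mul_le {Z : Matrix n n ℝ} (hC : C.IsSymm) (hZ : Z.IsSymm)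
    {μ : ℝ} (h : ∀ X, X.IsSymm → ((Z * X).trace : EReal) ≤ μ * psdConeGauge C X) :
    (μ • C - Z).PosSemidef := by
  have hsymm : (μ • C - Z).IsHermitian := by
    rw [isHermitian_iff_isSymm, IsSymm, transpose_sub, transpose_smul, hC.eq, hZ.eq]
  refine hsymm.posSemidef_iff_forall_trace_mul_nonneg.2 fun X hX => ?_
  have hle := h X (isHermitian_iff_isSymm.1 hX.isHermitian)
  rw [psdConeGauge_of_posSemidef hX, ← EReal.coe_mul, EReal.coe_le_coe_iff] at hle
  rw [trace_smul_sub_mul]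
  linarith

theorem sInf_psdConeGauge_polar_eq (hC : C.PosSemidef) {Z : Matrix n n ℝ} (hZ : Z.IsSymm) :
    sInf {μ : EReal | ∃ mu : ℝ, 0 ≤ mu ∧ μ = (mu : EReal) ∧
        ∀ X, X.IsSymm → (((Z * X).trace : ℝ) : EReal) ≤ (mu : EReal) * psdConeGauge C X} =
      sInf {α : EReal | ∃ a : ℝ, 0 ≤ a ∧ α = (a : EReal) ∧ (a • C - Z).PosSemidef} := by
  refine le_antisymm (le_sInf ?_) (sInf_le_sInf ?_)
  · rintro _ ⟨a, ha, rfl, hpsd⟩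
    refine EReal.le_of_forall_lt_iff_le.1 fun r har => sInf_le ⟨r, ?_, rfl, fun X _ => ?_⟩
    · exact ha.trans (EReal.coe_lt_coe_iff.1 har).le
    · have har : a < r := EReal.coe_lt_coe_iff.1 har
      refine trace_mul_le_smul_psdConeGauge (ha.trans_lt har) ?_ X
      have hsplit : r • C - Z = (r - a) • C + (a • C - Z) := by
        rw [sub_smul]; abel
      exact hsplit ▸ (hC.smul (sub_nonneg.2 har.le)).add hpsd
  · rintro _ ⟨mu, hmu, rfl, h⟩
    exact ⟨mu, hmu, rfl, posSemidef_smul_sub_of_trace_mul_le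
      (isHermitian_iff_isSymm.1 hC.isHermitian) hZ h⟩

end PsdConeGauge

/-- For `C ∈ 𝒮ⁿ₊`, the function `J(X) = ⟨C,X⟩ + I_{𝒮ⁿ₊}(X)` on symmetric
matrices is a gauge (convex, nonnegative, positively homogeneous, `J 0 = 0`), and its
polar `J°(Z) = inf {μ ≥ 0 : ⟨Z,X⟩ ≤ μ J(X) for all X ∈ 𝒮ⁿ}` satisfies
`J°(Z) = inf {α ≥ 0 : αC - Z ∈ 𝒮ⁿ₊}`. -/
theorem semidefinite_conic_gauge_polar
    (N : ℕ) (C : Matrix (Fin N) (Fin N) ℝ) (hC : C.PosSemidef)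
    (J : Matrix (Fin N) (Fin N) ℝ → EReal)
    (hJ : ∀ X, J X = if X.PosSemidef then (((C * X).trace : ℝ) : EReal) else ⊤) :
    (∀ X, X.IsSymm → 0 ≤ J X) ∧
    J 0 = 0 ∧
    (∀ α : ℝ, 0 < α → ∀ X, X.IsSymm → J (α • X) = (α : EReal) * J X) ∧
    (∀ X Y, X.IsSymm → Y.IsSymm → ∀ a b : ℝ, 0 ≤ a → 0 ≤ b → a + b = 1 →
      J (a • X + b • Y) ≤ (a : EReal) * J X + (b : EReal) * J Y) ∧
    (∀ Z : Matrix (Fin N) (Fin N) ℝ, Z.IsSymm →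
      sInf {μ : EReal | ∃ mu : ℝ, 0 ≤ mu ∧ μ = (mu : EReal) ∧
          ∀ X, X.IsSymm → (((Z * X).trace : ℝ) : EReal) ≤ (mu : EReal) * J X} =
        sInf {α : EReal | ∃ a : ℝ, 0 ≤ a ∧ α = (a : EReal) ∧ (a • C - Z).PosSemidef}) := by
  obtain rfl : J = psdConeGauge C := funext hJ
  exact ⟨fun X _ => psdConeGauge_nonneg hC X, psdConeGauge_zero,
    fun _ hα X _ => psdConeGauge_smul hα X,
    fun X Y _ _ _ _ ha hb hab => psdConeGauge_convex hC X Y ha hb hab,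
    fun _ hZ => sInf_psdConeGauge_polar_eq hC hZ⟩
end
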